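/- arXiv:1112.2684 — 10 statements merged into one kernel-verified Lean document; each statement's English description precedes it below -/
import Mathlib

section
/- For every metric space (X,d), the function d_Con((x,t),(x′,t′)) = 2·log((d(x,x′) + max(t,t′))/√(t·t′)) is a metric on the set X × (0,∞). -/
/-- The Bonk–Schramm cone distance on `X × (0,∞)`:
`d_Con((x,t),(x′,t′)) = 2·log((d(x,x′) + max(t,t′))/√(t·t′))`. -/
noncomputable def dCon {X : Type*} [MetricSpace X] (p q : X × ℝ) : ℝ :=
  2 * Real.log ((dist p.1 q.1 + max p.2 q.2) / Real.sqrt (p.2 * q.2))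

lemma sqrt_le_max_aux (s t : ℝ) (hs : 0 < s) (ht : 0 < t) :
    Real.sqrt (s * t) ≤ max s t := by
  have h0 : (0:ℝ) ≤ max s t := le_trans hs.le (le_max_left s t)
  rw [← Real.sqrt_sq h0]
  apply Real.sqrt_le_sqrt
  have h1 := le_max_left s t
  have h2 := le_max_right s t
  nlinarith

lemma one_le_ratio {X : Type*} [MetricSpace X] (p q : X × ℝ) (hp : 0 < p.2) (hq : 0 < q.2) :
    1 ≤ (dist p.1 q.1 + max p.2 q.2) / Real.sqrt (p.2 * q.2) := by
  have hsq : 0 < Real.sqrt (p.2 * q.2) := Real.sqrt_pos.2 (mul_pos hp hq)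
  rw [le_div_iff₀ hsq, one_mul]
  have h1 := sqrt_le_max_aux p.2 q.2 hp hq
  have h2 := dist_nonneg (x := p.1) (y := q.1)
  linarith

lemma key_ineq (a b s t u : ℝ) (ha : 0 ≤ a) (hb : 0 ≤ b)
    (hs : 0 < s) (ht : 0 < t) (hu : 0 < u) :
    (a + b + max s u) * t ≤ (a + max s t) * (b + max t u) := by
  have h1 : t ≤ max s t := le_max_right s t
  have h2 : t ≤ max t u := le_max_left t u
  have h3 : t * max s u ≤ max s t * max t u := by
    rcases le_total s u with h | h
    · rw [max_eq_right h]
      have : u ≤ max t u := le_max_right t u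
      nlinarith
    · rw [max_eq_left h]
      have : s ≤ max s t := le_max_left s t
      nlinarith
  nlinarith [mul_nonneg ha hb, mul_le_mul_of_nonneg_left h2 ha,
    mul_le_mul_of_nonneg_left h1 hb]

/-- For every metric space `(X,d)`, the function `d_Con` is a metric on `X × (0,∞)`:
it is nonnegative, vanishes exactly on the diagonal, is symmetric, and satisfies the
triangle inequality. -/
theorem stmt_1 {X : Type*} [MetricSpace X] :
    (∀ p q : X × ℝ, 0 < p.2 → 0 < q.2 → 0 ≤ dCon p q) ∧
    (∀ p q : X × ℝ, 0 < p.2 → 0 < q.2 → (dCon p q = 0 ↔ p = q)) ∧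
    (∀ p q : X × ℝ, 0 < p.2 → 0 < q.2 → dCon p q = dCon q p) ∧
    (∀ p q r : X × ℝ, 0 < p.2 → 0 < q.2 → 0 < r.2 →
      dCon p r ≤ dCon p q + dCon q r) := by
  refine ⟨?_, ?_, ?_, ?_⟩
  · intro p q hp hq
    exact mul_nonneg (by norm_num) (Real.log_nonneg (one_le_ratio p q hp hq))
  · intro p q hp hq
    constructor
    · intro h
      have hsq : 0 < Real.sqrt (p.2 * q.2) := Real.sqrt_pos.2 (mul_pos hp hq)
      have h1 := one_le_ratio p q hp hq
      have hlog : Real.log ((dist p.1 q.1 + max p.2 q.2) / Real.sqrt (p.2 * q.2)) = 0 := by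
        have := h; unfold dCon at this; linarith
      have hf : (dist p.1 q.1 + max p.2 q.2) / Real.sqrt (p.2 * q.2) = 1 := by
        have := Real.exp_log (lt_of_lt_of_le one_pos h1)
        rw [hlog, Real.exp_zero] at this
        exact this.symm
      rw [div_eq_one_iff_eq hsq.ne'] at hf
      have hmax := sqrt_le_max_aux p.2 q.2 hp hq
      have hd0 : dist p.1 q.1 = 0 := le_antisymm (by linarith) dist_nonneg
      have hx : p.1 = q.1 := dist_eq_zero.1 hd0
      have hmeq : max p.2 q.2 = Real.sqrt (p.2 * q.2) := by linarith
      have hsq2 : (max p.2 q.2) ^ 2 = p.2 * q.2 := by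
        rw [hmeq, Real.sq_sqrt (mul_pos hp hq).le]
      have ht : p.2 = q.2 := by
        rcases le_total p.2 q.2 with h' | h'
        · rw [max_eq_right h'] at hsq2; nlinarith
        · rw [max_eq_left h'] at hsq2; nlinarith
      exact Prod.ext hx ht
    · rintro rfl
      unfold dCon
      rw [dist_self, zero_add, max_self, Real.sqrt_mul_self hp.le,
        div_self hp.ne', Real.log_one, mul_zero]
  · intro p q hp hq
    unfold dCon
    rw [dist_comm, max_comm, mul_comm p.2 q.2]
  · intro p q r hp hq hr
    set s := p.2; set t := q.2; set u := r.2
    have hsu : 0 < Real.sqrt (s * u) := Real.sqrt_pos.2 (mul_pos hp hr)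
    have hst : 0 < Real.sqrt (s * t) := Real.sqrt_pos.2 (mul_pos hp hq)
    have htu : 0 < Real.sqrt (t * u) := Real.sqrt_pos.2 (mul_pos hq hr)
    have hF : 0 < (dist p.1 r.1 + max s u) / Real.sqrt (s * u) :=
      lt_of_lt_of_le one_pos (one_le_ratio p r hp hr)
    have hF1 : 0 < (dist p.1 q.1 + max s t) / Real.sqrt (s * t) :=
      lt_of_lt_of_le one_pos (one_le_ratio p q hp hq)
    have hF2 : 0 < (dist q.1 r.1 + max t u) / Real.sqrt (t * u) :=
      lt_of_lt_of_le one_pos (one_le_ratio q r hq hr)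
    unfold dCon
    rw [← mul_add, ← Real.log_mul hF1.ne' hF2.ne']
    have hle : (dist p.1 r.1 + max s u) / Real.sqrt (s * u) ≤
        ((dist p.1 q.1 + max s t) / Real.sqrt (s * t)) *
        ((dist q.1 r.1 + max t u) / Real.sqrt (t * u)) := by
      rw [div_mul_div_comm, div_le_div_iff₀ hsu (mul_pos hst htu)]
      have hsqmul : Real.sqrt (s * t) * Real.sqrt (t * u) = t * Real.sqrt (s * u) := by
        rw [← Real.sqrt_mul (mul_pos hp hq).le]
        have : s * t * (t * u) = t ^ 2 * (s * u) := by ring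
        rw [this, Real.sqrt_mul (sq_nonneg t), Real.sqrt_sq hq.le]
      rw [hsqmul]
      have hkey : (dist p.1 r.1 + max s u) * t ≤
          (dist p.1 q.1 + max s t) * (dist q.1 r.1 + max t u) := by
        have htri := dist_triangle p.1 q.1 r.1
        have := key_ineq (dist p.1 q.1) (dist q.1 r.1) s t u dist_nonneg dist_nonneg hp hq hr
        nlinarith [le_trans hp.le (le_max_left s t), le_trans hq.le (le_max_left t u),
          dist_nonneg (x := p.1) (y := q.1), dist_nonneg (x := q.1) (y := r.1)]
      calc (dist p.1 r.1 + max s u) * (t * Real.sqrt (s * u))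
          = ((dist p.1 r.1 + max s u) * t) * Real.sqrt (s * u) := by ring
        _ ≤ ((dist p.1 q.1 + max s t) * (dist q.1 r.1 + max t u)) * Real.sqrt (s * u) :=
            mul_le_mul_of_nonneg_right hkey hsu.le
    exact mul_le_mul_of_nonneg_left (Real.log_le_log hF hle) (by norm_num)
end

section
/- For every complete metric space (X,d) there exists δ ≥ 0 such that Con(X) is δ-hyperbolic, i.e. for all p, p′, p″, q ∈ X × (0,∞) one has (p|p″)_q ≥ min{(p|p′)_q, (p′|p″)_q} − δ, where the Gromov product is taken with respect to the metric d_Con. -/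
/-- The Gromov product `(p|p′)_q` in `Con(X)`, with respect to the metric `d_Con`. -/
noncomputable def gromovCon {X : Type*} [MetricSpace X] (p p' q : X × ℝ) : ℝ :=
  (dCon p q + dCon q p' - dCon p p') / 2

/-- Core algebraic inequality: the inversion quasi-metric estimate. -/
lemma coneCore (a b c e12 e23 e13 : ℝ) (ha : 0 < a) (hb : 0 < b) (hc : 0 < c)
    (h12 : 0 < e12) (h23 : 0 < e23) (h13 : 0 < e13)
    (t1 : a ≤ b + e12) (t2 : b ≤ c + e23) (t3 : b ≤ a + e12) (_t4 : c ≤ b + e23)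
    (t5 : e13 ≤ e12 + e23) (t6 : e13 ≤ a + c) (h : a * e23 ≤ c * e12) :
    b * e13 ≤ 8 * (c * e12) := by
  rcases le_or_gt a (2 * e12) with h1 | h1
  · -- b*e13 ≤ b*(a+c) ≤ (c+e23)*a + (a+e12)*c ≤ 2ac + a e23 + e12 c ≤ 6 c e12
    nlinarith [mul_le_mul_of_nonneg_left t6 hb.le,
      mul_le_mul_of_nonneg_right t2 ha.le,
      mul_le_mul_of_nonneg_right t3 hc.le,
      mul_le_mul_of_nonneg_right h1 hc.le]
  · have hb13 : b * e13 ≤ (a + e12) * (e12 + e23) :=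
      mul_le_mul t3 t5 h13.le (by linarith)
    rcases le_or_gt e23 (a / 4) with h2 | h2
    · -- c ≥ a/4, b ≤ 3/2 a, e13 ≤ 3/4 a
      have hca : a ≤ 4 * c := by nlinarith
      nlinarith [mul_le_mul_of_nonneg_right hca h12.le]
    · -- a e23 > a²/4 so c e12 > a²/4, e12 < a/2 gives a < 2c
      have hac : a < 2 * c := by nlinarith
      nlinarith [mul_le_mul_of_nonneg_right hac.le h12.le,
        mul_lt_mul_of_pos_left h2 h12, mul_lt_mul_of_pos_right h1 h23]

lemma dCon_eq {X : Type*} [MetricSpace X] (p q : X × ℝ) (hp : 0 < p.2) (hq : 0 < q.2) :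
    dCon p q = 2 * Real.log (dist p.1 q.1 + max p.2 q.2) - Real.log p.2 - Real.log q.2 := by
  have hA : 0 < dist p.1 q.1 + max p.2 q.2 := by
    have := dist_nonneg (x := p.1) (y := q.1)
    have : 0 < max p.2 q.2 := lt_max_of_lt_left hp
    positivity
  have hpq : 0 < p.2 * q.2 := mul_pos hp hq
  unfold dCon
  rw [Real.log_div hA.ne' (Real.sqrt_ne_zero'.mpr hpq),
    Real.log_sqrt hpq.le, Real.log_mul hp.ne' hq.ne']
  ring

lemma gromovCon_eq {X : Type*} [MetricSpace X] (p p' q : X × ℝ)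
    (hp : 0 < p.2) (hp' : 0 < p'.2) (hq : 0 < q.2) :
    gromovCon p p' q = Real.log (dist p.1 q.1 + max p.2 q.2)
      + Real.log (dist p'.1 q.1 + max p'.2 q.2)
      - Real.log (dist p.1 p'.1 + max p.2 p'.2) - Real.log q.2 := by
  unfold gromovCon
  rw [dCon_eq p q hp hq, dCon_eq q p' hq hp', dCon_eq p p' hp hp',
    dist_comm q.1 p'.1, max_comm q.2 p'.2]
  ring

/-- For every complete metric space `(X,d)` there exists `δ ≥ 0` such that `Con(X)` is
`δ`-hyperbolic: for all `p, p′, p″, q ∈ X × (0,∞)`,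
`(p|p″)_q ≥ min{(p|p′)_q, (p′|p″)_q} − δ`. -/
theorem stmt_3 {X : Type*} [MetricSpace X] [CompleteSpace X] :
    ∃ δ : ℝ, 0 ≤ δ ∧ ∀ p p' p'' q : X × ℝ,
      0 < p.2 → 0 < p'.2 → 0 < p''.2 → 0 < q.2 →
      gromovCon p p'' q ≥ min (gromovCon p p' q) (gromovCon p' p'' q) - δ := by
  refine ⟨Real.log 8, Real.log_nonneg (by norm_num), fun p p' p'' q hp hp' hp'' hq => ?_⟩
  have maxtri : ∀ u v w : ℝ, 0 ≤ u → 0 ≤ w → max u w ≤ max u v + max v w := fun u v w hu hw =>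
    max_le (le_add_of_le_of_nonneg (le_max_left u v) (le_trans hw (le_max_right v w)))
      (le_add_of_nonneg_of_le (le_trans hu (le_max_left u v)) (le_max_right v w))
  set a := dist p.1 q.1 + max p.2 q.2 with hadef
  set b := dist p'.1 q.1 + max p'.2 q.2 with hbdef
  set c := dist p''.1 q.1 + max p''.2 q.2 with hcdef
  set e12 := dist p.1 p'.1 + max p.2 p'.2 with h12def
  set e23 := dist p'.1 p''.1 + max p'.2 p''.2 with h23def
  set e13 := dist p.1 p''.1 + max p.2 p''.2 with h13def
  have ha : 0 < a := by
    have := dist_nonneg (x := p.1) (y := q.1); have : 0 < max p.2 q.2 := lt_max_of_lt_left hp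
    positivity
  have hb : 0 < b := by
    have := dist_nonneg (x := p'.1) (y := q.1); have : 0 < max p'.2 q.2 := lt_max_of_lt_left hp'
    positivity
  have hc : 0 < c := by
    have := dist_nonneg (x := p''.1) (y := q.1); have : 0 < max p''.2 q.2 := lt_max_of_lt_left hp''
    positivity
  have h12 : 0 < e12 := by
    have := dist_nonneg (x := p.1) (y := p'.1); have : 0 < max p.2 p'.2 := lt_max_of_lt_left hp
    positivity
  have h23 : 0 < e23 := by
    have := dist_nonneg (x := p'.1) (y := p''.1); have : 0 < max p'.2 p''.2 := lt_max_of_lt_left hp'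
    positivity
  have h13 : 0 < e13 := by
    have := dist_nonneg (x := p.1) (y := p''.1); have : 0 < max p.2 p''.2 := lt_max_of_lt_left hp
    positivity
  have t1 : a ≤ b + e12 := by
    have hd := dist_triangle p.1 p'.1 q.1
    have hm := maxtri p.2 p'.2 q.2 hp.le hq.le
    simp only [hadef, hbdef, h12def]; linarith
  have t2 : b ≤ c + e23 := by
    have hd := dist_triangle p'.1 p''.1 q.1
    have hm := maxtri p'.2 p''.2 q.2 hp'.le hq.le
    simp only [hbdef, hcdef, h23def]; linarith
  have t3 : b ≤ a + e12 := by
    have hd : dist p'.1 q.1 ≤ dist p.1 p'.1 + dist p.1 q.1 := dist_triangle_left _ _ _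
    have hm : max p'.2 q.2 ≤ max p.2 p'.2 + max p.2 q.2 := by
      rw [max_comm p.2 p'.2]; exact maxtri _ _ _ hp'.le hq.le
    simp only [hbdef, hadef, h12def]; linarith
  have t4 : c ≤ b + e23 := by
    have hd : dist p''.1 q.1 ≤ dist p'.1 p''.1 + dist p'.1 q.1 := dist_triangle_left _ _ _
    have hm : max p''.2 q.2 ≤ max p'.2 p''.2 + max p'.2 q.2 := by
      rw [max_comm p'.2 p''.2]; exact maxtri _ _ _ hp''.le hq.le
    simp only [hcdef, hbdef, h23def]; linarith
  have t5 : e13 ≤ e12 + e23 := by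
    have hd := dist_triangle p.1 p'.1 p''.1
    have hm := maxtri p.2 p'.2 p''.2 hp.le hp''.le
    simp only [h13def, h12def, h23def]; linarith
  have t6 : e13 ≤ a + c := by
    have hd : dist p.1 p''.1 ≤ dist p.1 q.1 + dist p''.1 q.1 := dist_triangle_right _ _ _
    have hm : max p.2 p''.2 ≤ max p.2 q.2 + max p''.2 q.2 := by
      rw [max_comm p''.2 q.2]; exact maxtri _ _ _ hp.le hp''.le
    simp only [h13def, hadef, hcdef]; linarith
  rw [gromovCon_eq p p' q hp hp' hq, gromovCon_eq p' p'' q hp' hp'' hq,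
    gromovCon_eq p p'' q hp hp'' hq]
  rcases le_total (a * e23) (c * e12) with h | h
  · have key : b * e13 ≤ 8 * (c * e12) :=
      coneCore a b c e12 e23 e13 ha hb hc h12 h23 h13 t1 t2 t3 t4 t5 t6 h
    have hlog : Real.log (b * e13) ≤ Real.log (8 * (c * e12)) :=
      Real.log_le_log (by positivity) key
    rw [Real.log_mul hb.ne' h13.ne', Real.log_mul (by norm_num) (by positivity),
      Real.log_mul hc.ne' h12.ne'] at hlog
    have hmin := min_le_left
      (Real.log a + Real.log b - Real.log e12 - Real.log q.2)
      (Real.log b + Real.log c - Real.log e23 - Real.log q.2)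
    linarith
  · have key : b * e13 ≤ 8 * (a * e23) :=
      coneCore c b a e23 e12 e13 hc hb ha h23 h12 h13 t4 t3 t2 t1
        (by linarith) (by linarith) h
    have hlog : Real.log (b * e13) ≤ Real.log (8 * (a * e23)) :=
      Real.log_le_log (by positivity) key
    rw [Real.log_mul hb.ne' h13.ne', Real.log_mul (by norm_num) (by positivity),
      Real.log_mul ha.ne' h23.ne'] at hlog
    have hmin := min_le_right
      (Real.log a + Real.log b - Real.log e12 - Real.log q.2)
      (Real.log b + Real.log c - Real.log e23 - Real.log q.2)
    linarith
end

section
/- Let (X,d) be a metric space with diam(X) ≤ D, where 0 < D < ∞, and fix x₀ ∈ X. Then for all x, y ∈ X the limit lim_{s→∞} exp(−(γ_x(s)|γ_y(s))_{(x₀,D)}) (Gromov products taken in Con(X)) exists and equals D·d(x,y)/((d(x,x₀)+D)·(d(y,x₀)+D)); in particular d(x,y)/(4D) ≤ lim_{s→∞} exp(−(γ_x(s)|γ_y(s))_{(x₀,D)}) ≤ d(x,y)/D, so d is bi-Lipschitz to the e-visual quasimetric on the boundary of Con(X). -/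
/-!
The Gromov product in `Con(X)` is explicit: with base point `(z, u)`,

  `exp (-((x, t) | (y, t'))_(z, u)) =`
    `u (d(x,y) + max t t') / ((d(x,z) + max t u) (d(z,y) + max u t'))`,

since the square-root normalisations `√(t t')`, `√(t u)`, `√(u t')` of the three cone
distances cancel up to the factor `u`. Along `γ_x, γ_y` we have `t = t' = e^{-s} → 0`, and
the right-hand side is continuous in `t`, so the limit is its value at `t = 0`, where
`max t u = u`. The two bounds then only use `0 ≤ d(·, x₀) ≤ D`.
-/

open Filter Topology

section ConeGromovProduct

variable {X : Type*} [MetricSpace X]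

lemma exp_half_dCon {p q : X × ℝ} (hp : 0 < p.2) (hq : 0 < q.2) :
    Real.exp (dCon p q / 2) = (dist p.1 q.1 + max p.2 q.2) / Real.sqrt (p.2 * q.2) := by
  have hpos : 0 < dist p.1 q.1 + max p.2 q.2 :=
    add_pos_of_nonneg_of_pos dist_nonneg (lt_max_of_lt_left hp)
  rw [dCon, mul_div_cancel_left₀ _ two_ne_zero, Real.exp_log (by positivity)]

lemma exp_neg_gromovCon (x y z : X) {t t' u : ℝ} (ht : 0 < t) (ht' : 0 < t') (hu : 0 < u) :
    Real.exp (-gromovCon (x, t) (y, t') (z, u)) =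
      u * (dist x y + max t t') / ((dist x z + max t u) * (dist z y + max u t')) := by
  have hexp : Real.exp (-gromovCon (x, t) (y, t') (z, u)) =
      Real.exp (dCon (x, t) (y, t') / 2) /
        (Real.exp (dCon (x, t) (z, u) / 2) * Real.exp (dCon (z, u) (y, t') / 2)) := by
    rw [← Real.exp_add, ← Real.exp_sub, gromovCon]
    ring_nf
  have hsqrt : Real.sqrt (t * u) * Real.sqrt (u * t') = u * Real.sqrt (t * t') := by
    rw [← Real.sqrt_mul (by positivity), show t * u * (u * t') = u ^ 2 * (t * t') by ring,
      Real.sqrt_mul (by positivity), Real.sqrt_sq hu.le]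
  have hxz : 0 < dist x z + max t u :=
    add_pos_of_nonneg_of_pos dist_nonneg (lt_max_of_lt_left ht)
  have hzy : 0 < dist z y + max u t' :=
    add_pos_of_nonneg_of_pos dist_nonneg (lt_max_of_lt_left hu)
  have htt' : 0 < Real.sqrt (t * t') := by positivity
  rw [hexp, exp_half_dCon (p := (x, t)) (q := (y, t')) ht ht',
    exp_half_dCon (p := (x, t)) (q := (z, u)) ht hu,
    exp_half_dCon (p := (z, u)) (q := (y, t')) hu ht', div_mul_div_comm, hsqrt]
  field_simp

lemma tendsto_exp_neg_gromovCon_cone_rays (x y z : X) {u : ℝ} (hu : 0 < u) :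
    Tendsto (fun s : ℝ => Real.exp (-gromovCon (x, Real.exp (-s)) (y, Real.exp (-s)) (z, u)))
      atTop (𝓝 (u * dist x y / ((dist x z + u) * (dist z y + u)))) := by
  set f : ℝ → ℝ := fun t =>
    u * (dist x y + max t t) / ((dist x z + max t u) * (dist z y + max u t))
  have hf : Continuous f := by
    refine Continuous.div (by fun_prop) (by fun_prop) fun t => ?_
    have hxz : 0 < dist x z + max t u :=
      add_pos_of_nonneg_of_pos dist_nonneg (lt_max_of_lt_right hu)
    have hzy : 0 < dist z y + max u t :=
      add_pos_of_nonneg_of_pos dist_nonneg (lt_max_of_lt_left hu)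
    positivity
  have hf0 : f 0 = u * dist x y / ((dist x z + u) * (dist z y + u)) := by
    simp only [f, max_self, add_zero, max_eq_right hu.le, max_eq_left hu.le]
  rw [← hf0]
  exact ((hf.tendsto 0).comp Real.tendsto_exp_neg_atTop_nhds_zero).congr fun s =>
    (exp_neg_gromovCon x y z (Real.exp_pos _) (Real.exp_pos _) hu).symm

end ConeGromovProduct

section VisualBounds

variable {a b c D : ℝ}

lemma mul_div_add_mul_add_le_div (hD : 0 < D) (ha : 0 ≤ a) (hb : 0 ≤ b) (hc : 0 ≤ c) :
    D * c / ((a + D) * (b + D)) ≤ c / D :=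
  calc D * c / ((a + D) * (b + D)) ≤ D * c / (D * D) := by
        gcongr <;> linarith
    _ = c / D := by field_simp

lemma div_four_mul_le_mul_div_add_mul_add (hD : 0 < D) (ha : 0 ≤ a) (hb : 0 ≤ b) (hc : 0 ≤ c)
    (haD : a ≤ D) (hbD : b ≤ D) :
    c / (4 * D) ≤ D * c / ((a + D) * (b + D)) :=
  calc c / (4 * D) = D * c / ((D + D) * (D + D)) := by field_simp; ring
    _ ≤ D * c / ((a + D) * (b + D)) := by gcongr

end VisualBounds

/-- Let `(X,d)` have diameter at most `D`, `0 < D < ∞`, and fix `x₀ ∈ X`. Then for all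
`x, y ∈ X` the limit `lim_{s→∞} exp(−(γ_x(s)|γ_y(s))_{(x₀,D)})` exists and equals
`D·d(x,y)/((d(x,x₀)+D)·(d(y,x₀)+D))`; in particular this value lies between
`d(x,y)/(4D)` and `d(x,y)/D`, so `d` is bi-Lipschitz to the `e`-visual quasimetric on the
boundary of `Con(X)`. -/
theorem stmt_5 {X : Type*} [MetricSpace X] (D : ℝ) (hD : 0 < D)
    (hdiam : ∀ x y : X, dist x y ≤ D) (x₀ x y : X) :
    Filter.Tendsto
        (fun s : ℝ =>
          Real.exp (-(gromovCon (x, Real.exp (-s)) (y, Real.exp (-s)) (x₀, D))))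
        Filter.atTop
        (nhds (D * dist x y / ((dist x x₀ + D) * (dist y x₀ + D)))) ∧
    dist x y / (4 * D) ≤ D * dist x y / ((dist x x₀ + D) * (dist y x₀ + D)) ∧
    D * dist x y / ((dist x x₀ + D) * (dist y x₀ + D)) ≤ dist x y / D := by
  refine ⟨?_, div_four_mul_le_mul_div_add_mul_add hD dist_nonneg dist_nonneg dist_nonneg
      (hdiam x x₀) (hdiam y x₀),
    mul_div_add_mul_add_le_div hD dist_nonneg dist_nonneg dist_nonneg⟩
  simpa only [dist_comm x₀ y] using tendsto_exp_neg_gromovCon_cone_rays x y x₀ hD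
end

section
/- Let (X,d) be an unbounded complete metric space, α : X → X a bijection with d(αx,αy) = a·d(x,y) for all x,y and some a > 1, and K ⊆ X a compact set with ⋃_{n∈ℤ} αⁿ(K) = X. Fix x₀ ∈ X. Then for every C ≥ 0, every C-rough geodesic ray ξ : [0,∞) → Con(X) is at finite Hausdorff distance (with respect to d_Con) either from the image of γ_{∞,x₀} or from the image of γ_x for some x ∈ X. In other words, the map ι : X ∪ {∞} → ∂_∞Con(X) sending x to [γ_x] and ∞ to [γ_{∞,x₀}] is surjective. -/
/-- Two subsets of `Con(X)` are at Hausdorff distance at most `R` with respect to `d_Con`. -/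
def HausCloseCon {X : Type*} [MetricSpace X] (A B : Set (X × ℝ)) (R : ℝ) : Prop :=
  (∀ p ∈ A, ∃ q ∈ B, dCon p q ≤ R) ∧ (∀ q ∈ B, ∃ p ∈ A, dCon p q ≤ R)

private lemma sqrt_exp_half (a : ℝ) : Real.sqrt (Real.exp a) = Real.exp (a / 2) := by
  rw [show Real.exp a = Real.exp (a / 2) ^ 2 by rw [sq, ← Real.exp_add, add_halves]]
  exact Real.sqrt_sq (Real.exp_pos _).le

private lemma dCon_exp_eq {X : Type*} [MetricSpace X] (x y : X) (a b : ℝ) :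
    dCon (x, Real.exp a) (y, Real.exp b)
      = 2 * Real.log ((dist x y + max (Real.exp a) (Real.exp b)) / Real.exp ((a + b) / 2)) := by
  show 2 * Real.log ((dist x y + max (Real.exp a) (Real.exp b))
      / Real.sqrt (Real.exp a * Real.exp b)) = _
  rw [← Real.exp_add, sqrt_exp_half]

private lemma H_pos {X : Type*} [MetricSpace X] (x y : X) (a b : ℝ) :
    0 < dist x y + max (Real.exp a) (Real.exp b) := by
  have h1 : (0:ℝ) < max (Real.exp a) (Real.exp b) := lt_max_of_lt_left (Real.exp_pos a)
  have h2 : (0:ℝ) ≤ dist x y := dist_nonneg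
  linarith

private lemma H_le_of_dCon_le {X : Type*} [MetricSpace X] (x y : X) (a b M : ℝ)
    (h : dCon (x, Real.exp a) (y, Real.exp b) ≤ M) :
    dist x y + max (Real.exp a) (Real.exp b) ≤ Real.exp ((a + b) / 2 + M / 2) := by
  rw [dCon_exp_eq] at h
  have hH := H_pos x y a b
  have hq : 0 < (dist x y + max (Real.exp a) (Real.exp b)) / Real.exp ((a + b) / 2) :=
    div_pos hH (Real.exp_pos _)
  have h2 : Real.log ((dist x y + max (Real.exp a) (Real.exp b)) / Real.exp ((a + b) / 2))
      ≤ M / 2 := by linarith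
  rw [Real.log_le_iff_le_exp hq, div_le_iff₀ (Real.exp_pos _)] at h2
  calc dist x y + max (Real.exp a) (Real.exp b)
      ≤ Real.exp (M / 2) * Real.exp ((a + b) / 2) := h2
    _ = Real.exp ((a + b) / 2 + M / 2) := by rw [← Real.exp_add]; ring_nf

private lemma H_ge_of_dCon_ge {X : Type*} [MetricSpace X] (x y : X) (a b M : ℝ)
    (h : M ≤ dCon (x, Real.exp a) (y, Real.exp b)) :
    Real.exp ((a + b) / 2 + M / 2) ≤ dist x y + max (Real.exp a) (Real.exp b) := by
  rw [dCon_exp_eq] at h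
  have hH := H_pos x y a b
  have hq : 0 < (dist x y + max (Real.exp a) (Real.exp b)) / Real.exp ((a + b) / 2) :=
    div_pos hH (Real.exp_pos _)
  have h2 : M / 2 ≤ Real.log ((dist x y + max (Real.exp a) (Real.exp b))
      / Real.exp ((a + b) / 2)) := by linarith
  rw [Real.le_log_iff_exp_le hq, le_div_iff₀ (Real.exp_pos _)] at h2
  calc Real.exp ((a + b) / 2 + M / 2)
      = Real.exp (M / 2) * Real.exp ((a + b) / 2) := by rw [← Real.exp_add]; ring_nf
    _ ≤ dist x y + max (Real.exp a) (Real.exp b) := h2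

private lemma dCon_le_aux {X : Type*} [MetricSpace X] (x y : X) (a b B : ℝ)
    (h : dist x y + max (Real.exp a) (Real.exp b) ≤ B * Real.exp ((a + b) / 2)) :
    dCon (x, Real.exp a) (y, Real.exp b) ≤ 2 * Real.log B := by
  rw [dCon_exp_eq]
  have hH := H_pos x y a b
  have hE := Real.exp_pos ((a + b) / 2)
  have hB : 0 < B := by nlinarith
  have h1 : (dist x y + max (Real.exp a) (Real.exp b)) / Real.exp ((a + b) / 2) ≤ B :=
    (div_le_iff₀ hE).mpr h
  have h2 : 0 < (dist x y + max (Real.exp a) (Real.exp b)) / Real.exp ((a + b) / 2) :=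
    div_pos hH hE
  have := Real.log_le_log h2 h1
  linarith

set_option maxHeartbeats 3000000 in
/-- Let `(X,d)` be an unbounded complete metric space, `α : X → X` a bijection with
`d(αx,αy) = a·d(x,y)` for some `a > 1`, and `K ⊆ X` compact with `⋃_{n∈ℤ} αⁿ(K) = X`.
Then every `C`-rough geodesic ray `ξ : [0,∞) → Con(X)` is at finite Hausdorff distance
(w.r.t. `d_Con`) either from the image of `γ_{∞,x₀}` or from the image of `γ_x` for some
`x ∈ X`; i.e. the map `ι : X ∪ {∞} → ∂_∞Con(X)` is surjective. -/
theorem stmt_7 {X : Type*} [MetricSpace X] [CompleteSpace X]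
    (hunb : ∀ R : ℝ, ∃ x y : X, R < dist x y)
    (α : Equiv.Perm X) (a : ℝ) (ha : 1 < a)
    (hα : ∀ x y : X, dist (α x) (α y) = a * dist x y)
    (K : Set X) (hK : IsCompact K)
    (hcover : (⋃ n : ℤ, ⇑(α ^ n) '' K) = Set.univ)
    (x₀ : X) (C : ℝ) (hC : 0 ≤ C)
    (ξ : ℝ → X × ℝ)
    (hξpos : ∀ s : ℝ, 0 ≤ s → 0 < (ξ s).2)
    (hξ : ∀ s : ℝ, 0 ≤ s → ∀ s' : ℝ, 0 ≤ s' →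
      |s - s'| - C ≤ dCon (ξ s) (ξ s') ∧ dCon (ξ s) (ξ s') ≤ |s - s'| + C) :
    (∃ R : ℝ, HausCloseCon (ξ '' Set.Ici 0)
        ((fun s : ℝ => (x₀, Real.exp s)) '' Set.Ici 0) R) ∨
    (∃ x : X, ∃ R : ℝ, HausCloseCon (ξ '' Set.Ici 0)
        ((fun s : ℝ => (x, Real.exp (-s))) '' Set.Ici 0) R) := by
  classical
  set u : ℝ → ℝ := fun s => Real.log ((ξ s).2) with hu_def
  have hexp : ∀ s : ℝ, 0 ≤ s → ξ s = ((ξ s).1, Real.exp (u s)) := by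
    intro s hs
    have h : Real.exp (u s) = (ξ s).2 := Real.exp_log (hξpos s hs)
    rw [h]
  clear_value u
  -- fundamental two-sided bound in exponential form
  have key : ∀ s : ℝ, 0 ≤ s → ∀ s' : ℝ, s ≤ s' →
      Real.exp ((u s + u s') / 2 + (s' - s - C) / 2)
        ≤ dist (ξ s).1 (ξ s').1 + max (Real.exp (u s)) (Real.exp (u s')) ∧
      dist (ξ s).1 (ξ s').1 + max (Real.exp (u s)) (Real.exp (u s'))
        ≤ Real.exp ((u s + u s') / 2 + (s' - s + C) / 2) := by
    intro s hs s' hss'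
    have hs' : 0 ≤ s' := hs.trans hss'
    have habs : |s - s'| = s' - s := by
      rw [abs_sub_comm]; exact abs_of_nonneg (by linarith)
    have h2 := hξ s hs s' hs'
    rw [habs] at h2
    have hrw : dCon (ξ s) (ξ s') = dCon ((ξ s).1, Real.exp (u s)) ((ξ s').1, Real.exp (u s')) := by
      rw [← hexp s hs, ← hexp s' hs']
    rw [hrw] at h2
    exact ⟨H_ge_of_dCon_ge _ _ _ _ _ h2.1, H_le_of_dCon_le _ _ _ _ _ h2.2⟩
  -- Lipschitz-type and distance bounds
  have lip : ∀ s : ℝ, 0 ≤ s → ∀ s' : ℝ, s ≤ s' →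
      u s' ≤ u s + (s' - s) + C ∧ u s ≤ u s' + (s' - s) + C ∧
      dist (ξ s).1 (ξ s').1 ≤ Real.exp (u s + (s' - s) + C) := by
    intro s hs s' hss'
    have hk := (key s hs s' hss').2
    have hW := hk
    have h1 : Real.exp (u s') ≤ Real.exp ((u s + u s') / 2 + (s' - s + C) / 2) := by
      have := le_max_right (Real.exp (u s)) (Real.exp (u s'))
      have hd : (0:ℝ) ≤ dist (ξ s).1 (ξ s').1 := dist_nonneg
      linarith
    have h2 : Real.exp (u s) ≤ Real.exp ((u s + u s') / 2 + (s' - s + C) / 2) := by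
      have := le_max_left (Real.exp (u s)) (Real.exp (u s'))
      have hd : (0:ℝ) ≤ dist (ξ s).1 (ξ s').1 := dist_nonneg
      linarith
    have h1' : u s' ≤ (u s + u s') / 2 + (s' - s + C) / 2 := Real.exp_le_exp.1 h1
    have h2' : u s ≤ (u s + u s') / 2 + (s' - s + C) / 2 := Real.exp_le_exp.1 h2
    refine ⟨by linarith, by linarith, ?_⟩
    have hd : dist (ξ s).1 (ξ s').1 ≤ Real.exp ((u s + u s') / 2 + (s' - s + C) / 2) := by
      have := lt_max_of_lt_left (b := Real.exp (u s)) (c := Real.exp (u s'))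
        (Real.exp_pos (u s))
      linarith
    calc dist (ξ s).1 (ξ s').1 ≤ Real.exp ((u s + u s') / 2 + (s' - s + C) / 2) := hd
      _ ≤ Real.exp (u s + (s' - s) + C) := by
          apply Real.exp_le_exp.2; linarith
  set c₁ : ℝ := 2 * C + 2 * Real.log 3 with hc₁_def
  have hlog3 : 0 ≤ Real.log 3 := Real.log_nonneg (by norm_num)
  have hc₁ : 0 ≤ c₁ := by positivity
  clear_value c₁
  -- trichotomy
  have tri : ∀ m : ℝ, 0 ≤ m → ∀ s : ℝ, m ≤ s →
      u s ≤ u m - (s - m) + c₁ ∨ u 0 + m - c₁ ≤ u m ∨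
      u s ≤ u 0 - s + c₁ ∨ u 0 + s - c₁ ≤ u s := by
    intro m hm s hms
    have hs0 : 0 ≤ s := hm.trans hms
    have h1 := (key 0 le_rfl s hs0).1
    have h2 := (key 0 le_rfl m hm).2
    have h3 := (key m hm s hms).2
    have htri := dist_triangle (ξ 0).1 (ξ m).1 (ξ s).1
    have hmax1 : (0:ℝ) ≤ max (Real.exp (u 0)) (Real.exp (u m)) :=
      le_max_of_le_left (Real.exp_pos _).le
    have hmax2 : (0:ℝ) ≤ max (Real.exp (u m)) (Real.exp (u s)) :=
      le_max_of_le_left (Real.exp_pos _).le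
    set L := Real.exp ((u 0 + u s) / 2 + (s - 0 - C) / 2) with hL_def
    set T1 := Real.exp ((u 0 + u m) / 2 + (m - 0 + C) / 2) with hT1_def
    set T2 := Real.exp ((u m + u s) / 2 + (s - m + C) / 2) with hT2_def
    have hsum : L ≤ T1 + T2 + max (Real.exp (u 0)) (Real.exp (u s)) := by linarith
    have h3way : L / 3 ≤ T1 ∨ L / 3 ≤ T2 ∨ L / 3 ≤ max (Real.exp (u 0)) (Real.exp (u s)) := by
      by_contra hcon
      push_neg at hcon
      obtain ⟨ha1, ha2, ha3⟩ := hcon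
      linarith
    have hLpos : 0 < L := Real.exp_pos _
    have hlogL : Real.log (L / 3) = (u 0 + u s) / 2 + (s - 0 - C) / 2 - Real.log 3 := by
      rw [Real.log_div (ne_of_gt hLpos) (by norm_num), hL_def, Real.log_exp]
    rcases h3way with hcase | hcase | hcase
    · left
      have := Real.log_le_log (by positivity) hcase
      rw [hlogL, hT1_def, Real.log_exp] at this
      linarith
    · right; left
      have := Real.log_le_log (by positivity) hcase
      rw [hlogL, hT2_def, Real.log_exp] at this
      linarith
    · rcases le_total (Real.exp (u 0)) (Real.exp (u s)) with h' | h'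
      · right; right; right
        rw [max_eq_right h'] at hcase
        have := Real.log_le_log (by positivity) hcase
        rw [hlogL, Real.log_exp] at this
        linarith
      · right; right; left
        rw [max_eq_left h'] at hcase
        have := Real.log_le_log (by positivity) hcase
        rw [hlogL, Real.log_exp] at this
        linarith
  by_cases hP : ∃ c : ℝ, ∀ s : ℝ, 0 ≤ s → s - c ≤ u s
  · -- CASE UP : close to γ_{∞,x₀}
    left
    obtain ⟨c0, hc0⟩ := hP
    set c := max c0 0 with hc_def
    have hcnn : 0 ≤ c := le_max_right _ _
    have hc : ∀ s : ℝ, 0 ≤ s → s - c ≤ u s := by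
      intro s hs
      have := hc0 s hs
      have : s - c ≤ s - c0 := by
        have := le_max_left c0 (0:ℝ); linarith
      linarith [hc0 s hs]
    clear_value c
    set d0 := dist (ξ 0).1 x₀ with hd0_def
    have hd0 : 0 ≤ d0 := dist_nonneg
    set κ := Real.exp (u 0 + C) + d0 with hκ_def
    have hκpos : 0 < κ := by positivity
    clear_value d0 κ
    have hdx : ∀ s : ℝ, 0 ≤ s → dist (ξ s).1 x₀ ≤ κ * Real.exp s := by
      intro s hs
      have h1 : dist (ξ s).1 x₀ ≤ dist (ξ 0).1 (ξ s).1 + d0 := by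
        rw [hd0_def, dist_comm (ξ 0).1 (ξ s).1]
        exact dist_triangle _ _ _
      have h2 := (lip 0 le_rfl s hs).2.2
      have h3 : Real.exp (u 0 + (s - 0) + C) = Real.exp (u 0 + C) * Real.exp s := by
        rw [← Real.exp_add]; ring_nf
      have h4 : (1:ℝ) ≤ Real.exp s := Real.one_le_exp hs
      have h5 : d0 ≤ d0 * Real.exp s := le_mul_of_one_le_right hd0 h4
      rw [h3] at h2
      calc dist (ξ s).1 x₀ ≤ Real.exp (u 0 + C) * Real.exp s + d0 := by linarith
        _ ≤ Real.exp (u 0 + C) * Real.exp s + d0 * Real.exp s := by linarith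
        _ = κ * Real.exp s := by rw [hκ_def]; ring
    set Bup := (κ * Real.exp c + 1) * Real.exp (c / 2) + Real.exp (u 0 + c + C) + 1 with hBup_def
    have hBup1 : κ * Real.exp c + 1 ≤ Bup := by
      rw [hBup_def]
      have h1 : (1:ℝ) ≤ Real.exp (c / 2) := Real.one_le_exp (by linarith)
      have h2 : 0 < κ * Real.exp c + 1 := by positivity
      have h3 := mul_le_mul_of_nonneg_left h1 h2.le
      have h4 := Real.exp_pos (u 0 + c + C)
      nlinarith
    have hBup2 : κ * Real.exp c + Real.exp (u 0 + c + C) ≤ Bup := by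
      rw [hBup_def]
      have h1 : (1:ℝ) ≤ Real.exp (c / 2) := Real.one_le_exp (by linarith)
      have h2 : 0 < κ * Real.exp c + 1 := by positivity
      have h3 := mul_le_mul_of_nonneg_left h1 h2.le
      nlinarith
    clear_value Bup
    refine ⟨2 * Real.log Bup, ?_, ?_⟩
    · -- forward
      rintro p ⟨s, hs, rfl⟩
      have hs : (0:ℝ) ≤ s := hs
      by_cases hus : 0 ≤ u s
      · refine ⟨(x₀, Real.exp (u s)), ⟨u s, Set.mem_Ici.mpr hus, rfl⟩, ?_⟩
        rw [hexp s hs]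
        apply dCon_le_aux
        rw [max_self]
        have h1 : Real.exp s ≤ Real.exp c * Real.exp (u s) := by
          rw [← Real.exp_add]
          exact Real.exp_le_exp.2 (by linarith [hc s hs])
        have h2 : dist (ξ s).1 x₀ ≤ κ * (Real.exp c * Real.exp (u s)) :=
          le_trans (hdx s hs) (mul_le_mul_of_nonneg_left h1 hκpos.le)
        have h3 : (u s + u s) / 2 = u s := by ring
        rw [h3]
        calc dist (ξ s).1 x₀ + Real.exp (u s)
            ≤ (κ * Real.exp c + 1) * Real.exp (u s) := by nlinarith
          _ ≤ Bup * Real.exp (u s) := by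
              exact mul_le_mul_of_nonneg_right hBup1 (Real.exp_pos _).le
      · rw [not_le] at hus
        refine ⟨(x₀, Real.exp 0), ⟨0, Set.self_mem_Ici, rfl⟩, ?_⟩
        rw [hexp s hs]
        apply dCon_le_aux
        have hsc : s ≤ c := by
          have := hc s hs; linarith
        have hmx : max (Real.exp (u s)) (Real.exp 0) = Real.exp 0 :=
          max_eq_right (Real.exp_le_exp.2 hus.le)
        rw [hmx, Real.exp_zero]
        have h1 : dist (ξ s).1 x₀ ≤ κ * Real.exp c :=
          le_trans (hdx s hs) (mul_le_mul_of_nonneg_left (Real.exp_le_exp.2 hsc) hκpos.le)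
        have h2 : Real.exp (c / 2) * Real.exp ((u s + 0) / 2) ≥ 1 := by
          rw [← Real.exp_add]
          apply Real.one_le_exp
          have := hc s hs
          linarith
        have h3 : 0 < Real.exp ((u s + 0) / 2) := Real.exp_pos _
        have h4 : (κ * Real.exp c + 1) * (Real.exp (c / 2) * Real.exp ((u s + 0) / 2))
            ≥ κ * Real.exp c + 1 := by
          have hpos : (0:ℝ) ≤ κ * Real.exp c + 1 := by positivity
          have h6 := mul_le_mul_of_nonneg_left h2 hpos
          nlinarith
        have h5 : (κ * Real.exp c + 1) * Real.exp (c / 2) ≤ Bup := by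
          rw [hBup_def]
          have := Real.exp_pos (u 0 + c + C)
          linarith
        calc dist (ξ s).1 x₀ + 1 ≤ κ * Real.exp c + 1 := by linarith
          _ ≤ (κ * Real.exp c + 1) * Real.exp (c / 2) * Real.exp ((u s + 0) / 2) := by
              calc κ * Real.exp c + 1
                  ≤ (κ * Real.exp c + 1) * (Real.exp (c / 2) * Real.exp ((u s + 0) / 2)) := h4
                _ = (κ * Real.exp c + 1) * Real.exp (c / 2) * Real.exp ((u s + 0) / 2) := by
                    ring
          _ ≤ Bup * Real.exp ((u s + 0) / 2) := by
              exact mul_le_mul_of_nonneg_right h5 h3.le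
    · -- backward
      rintro q ⟨σ, hσ, rfl⟩
      have hσ : (0:ℝ) ≤ σ := hσ
      set s := σ + c with hs_def
      have hs : (0:ℝ) ≤ s := by positivity
      clear_value s
      refine ⟨ξ s, ⟨s, Set.mem_Ici.mpr hs, rfl⟩, ?_⟩
      rw [hexp s hs]
      apply dCon_le_aux
      have hus1 : σ ≤ u s := by
        have h := hc s hs; linarith [hs_def]
      have hus2 : u s ≤ u 0 + σ + c + C := by
        have h := (lip 0 le_rfl s hs).1
        linarith [hs_def]
      have hmx : max (Real.exp (u s)) (Real.exp σ) = Real.exp (u s) :=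
        max_eq_left (Real.exp_le_exp.2 hus1)
      rw [hmx]
      have h1 : dist (ξ s).1 x₀ ≤ κ * (Real.exp c * Real.exp σ) := by
        have h := hdx s hs
        have he : Real.exp s = Real.exp c * Real.exp σ := by
          rw [hs_def, ← Real.exp_add]; ring_nf
        rw [he] at h
        exact h
      have h2 : Real.exp (u s) ≤ Real.exp (u 0 + c + C) * Real.exp σ := by
        rw [← Real.exp_add]
        exact Real.exp_le_exp.2 (by linarith)
      have h3 : Real.exp σ ≤ Real.exp ((u s + σ) / 2) :=
        Real.exp_le_exp.2 (by linarith)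
      have h4 : 0 ≤ κ * Real.exp c + Real.exp (u 0 + c + C) := by positivity
      calc dist (ξ s).1 x₀ + Real.exp (u s)
          ≤ (κ * Real.exp c + Real.exp (u 0 + c + C)) * Real.exp σ := by
            have h5 : (κ * Real.exp c + Real.exp (u 0 + c + C)) * Real.exp σ
                = κ * (Real.exp c * Real.exp σ) + Real.exp (u 0 + c + C) * Real.exp σ := by
              ring
            linarith
        _ ≤ (κ * Real.exp c + Real.exp (u 0 + c + C)) * Real.exp ((u s + σ) / 2) :=
            mul_le_mul_of_nonneg_left h3 h4
        _ ≤ Bup * Real.exp ((u s + σ) / 2) :=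
            mul_le_mul_of_nonneg_right hBup2 (Real.exp_pos _).le
  · -- CASE DOWN : close to γ_x for the limit x
    right
    push_neg at hP
    obtain ⟨m, hm0, hum⟩ := hP (c₁ + C + 1 - u 0)
    have hum' : u m < m + u 0 - c₁ - C - 1 := by linarith
    set B₁ := max (u m + m) (u 0) + c₁ with hB₁_def
    set B₂ := u m + m - C with hB₂_def
    clear_value B₁ B₂
    have hS1 : ∀ s : ℝ, m ≤ s → u s ≤ B₁ - s := by
      intro s hms
      have hs0 : 0 ≤ s := hm0.trans hms
      rcases tri m hm0 s hms with h | h | h | h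
      · have := le_max_left (u m + m) (u 0); linarith
      · linarith
      · have := le_max_right (u m + m) (u 0); linarith
      · exfalso
        have := (lip m hm0 s hms).1
        linarith
    have hS2 : ∀ s : ℝ, m ≤ s → B₂ - s ≤ u s := by
      intro s hms
      have := (lip m hm0 s hms).2.1
      linarith
    set Ecst := Real.exp (B₁ + 1 + C) with hEcst_def
    clear_value Ecst
    have h01 : 0 < 1 - Real.exp (-1) := by
      have : Real.exp (-1) < 1 := Real.exp_lt_one_iff.mpr (by norm_num)
      linarith
    set E := Ecst / (1 - Real.exp (-1)) with hE_def
    have hEpos : 0 < E := div_pos (by rw [hEcst_def]; positivity) h01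
    have hEeq : Ecst + E * Real.exp (-1) = E := by
      have hne := ne_of_gt h01
      rw [hE_def]
      field_simp
      ring
    have hEcstE : Ecst ≤ E := by
      have := mul_nonneg hEpos.le (Real.exp_pos (-1 : ℝ)).le
      linarith [hEeq]
    clear_value E
    have hstep : ∀ r : ℝ, m ≤ r → ∀ δ : ℝ, 0 ≤ δ → δ ≤ 1 →
        dist (ξ r).1 (ξ (r + δ)).1 ≤ Ecst * Real.exp (-r) := by
      intro r hmr δ hδ0 hδ1
      have h0r : 0 ≤ r := hm0.trans hmr
      have h := (lip r h0r (r + δ) (by linarith)).2.2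
      have h2 : u r + (r + δ - r) + C ≤ B₁ + 1 + C + -r := by
        have := hS1 r hmr; linarith
      calc dist (ξ r).1 (ξ (r + δ)).1 ≤ Real.exp (u r + (r + δ - r) + C) := h
        _ ≤ Real.exp (B₁ + 1 + C + -r) := Real.exp_le_exp.2 h2
        _ = Ecst * Real.exp (-r) := by rw [hEcst_def, ← Real.exp_add]
    have hcau : ∀ n : ℕ, ∀ s : ℝ, m ≤ s → ∀ s' : ℝ, s ≤ s' → s' ≤ s + n →
        dist (ξ s).1 (ξ s').1 ≤ E * Real.exp (-s) := by
      intro n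
      induction n with
      | zero =>
        intro s hms s' h1 h2
        have : s' = s := le_antisymm (by simpa using h2) h1
        subst this
        simp only [dist_self]
        positivity
      | succ n ih =>
        intro s hms s' h1 h2
        by_cases hcase : s' ≤ s + 1
        · have h := hstep s hms (s' - s) (by linarith) (by linarith)
          have heq : s + (s' - s) = s' := by ring
          rw [heq] at h
          have : Ecst * Real.exp (-s) ≤ E * Real.exp (-s) :=
            mul_le_mul_of_nonneg_right hEcstE (Real.exp_pos _).le
          linarith
        · push_neg at hcase
          have d1 := hstep s hms 1 zero_le_one le_rfl
          have d2 := ih (s + 1) (by linarith) s' (by linarith)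
            (by push_cast at h2 ⊢; linarith)
          have htr := dist_triangle (ξ s).1 (ξ (s + 1)).1 (ξ s').1
          have hexp1 : Real.exp (-(s + 1)) = Real.exp (-s) * Real.exp (-1) := by
            rw [← Real.exp_add]; ring_nf
          rw [hexp1] at d2
          have : Ecst * Real.exp (-s) + E * (Real.exp (-s) * Real.exp (-1))
              = E * Real.exp (-s) := by
            linear_combination Real.exp (-s) * hEeq
          linarith
    -- the Cauchy sequence and its limit
    set y : ℕ → X := fun k => (ξ (m + k)).1 with hy_def
    have hy : CauchySeq y := by
      apply cauchySeq_of_le_geometric (Real.exp (-1)) (E * Real.exp (-m))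
        (Real.exp_lt_one_iff.mpr (by norm_num))
      intro n
      have h := hcau 1 (m + n) (le_add_of_nonneg_right n.cast_nonneg)
        (m + (n + 1 : ℕ)) (by push_cast; linarith) (by push_cast; linarith)
      have heq : Real.exp (-(m + (n:ℝ))) = Real.exp (-m) * Real.exp (-1) ^ n := by
        rw [← Real.exp_nat_mul, ← Real.exp_add]; ring_nf
      calc dist (y n) (y (n + 1)) ≤ E * Real.exp (-(m + (n:ℝ))) := h
        _ = E * Real.exp (-m) * Real.exp (-1) ^ n := by rw [heq]; ring
    obtain ⟨xlim, hxlim⟩ := cauchySeq_tendsto_of_complete hy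
    have hlim : ∀ s : ℝ, m ≤ s → dist (ξ s).1 xlim ≤ E * Real.exp (-s) := by
      intro s hms
      have htd : Filter.Tendsto (fun k : ℕ => dist (ξ s).1 (y k)) Filter.atTop
          (nhds (dist (ξ s).1 xlim)) := Filter.Tendsto.dist tendsto_const_nhds hxlim
      apply le_of_tendsto htd
      filter_upwards [Filter.eventually_ge_atTop (Nat.ceil (s - m))] with k hk
      have hk2 : s - m ≤ (k : ℝ) := le_trans (Nat.le_ceil _) (by exact_mod_cast hk)
      exact hcau k s hms (m + k) (by linarith) (by linarith)
    refine ⟨xlim, ?_⟩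
    set m' := max m (max B₁ 0) with hm'_def
    have hm'0 : 0 ≤ m' := le_trans (le_max_right B₁ 0) (le_max_right _ _)
    have hmm' : m ≤ m' := le_max_left _ _
    have hB₁m' : B₁ ≤ m' := le_trans (le_max_left B₁ 0) (le_max_right _ _)
    clear_value m'
    set Bdn := (E * Real.exp (-B₂) + 1) + (E + Real.exp B₁)
      + (Real.exp (u 0 + m + 2 * C) + E + Real.exp (u 0 + m + C) + 1)
          * Real.exp ((m + C - u 0) / 2)
      + (E + 1) * Real.exp ((m' - B₂) / 2) with hBdn_def
    have hBdn_pos3 : 0 < (Real.exp (u 0 + m + 2 * C) + E + Real.exp (u 0 + m + C) + 1)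
        * Real.exp ((m + C - u 0) / 2) := by positivity
    have hBdn_pos4 : 0 < (E + 1) * Real.exp ((m' - B₂) / 2) := by positivity
    clear_value Bdn
    refine ⟨2 * Real.log Bdn, ?_, ?_⟩
    · -- forward
      rintro p ⟨s, hs, rfl⟩
      have hs : (0:ℝ) ≤ s := hs
      by_cases hsm : m ≤ s
      · by_cases hus : u s ≤ 0
        · refine ⟨(xlim, Real.exp (-(-u s))), ⟨-u s, Set.mem_Ici.mpr (by linarith), rfl⟩, ?_⟩
          rw [hexp s hs, neg_neg]
          apply dCon_le_aux
          rw [max_self]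
          have h1 : dist (ξ s).1 xlim ≤ E * Real.exp (-s) := hlim s hsm
          have h2 : Real.exp (-s) ≤ Real.exp (-B₂) * Real.exp (u s) := by
            rw [← Real.exp_add]
            apply Real.exp_le_exp.2
            have := hS2 s hsm; linarith
          have h3 : (u s + u s) / 2 = u s := by ring
          rw [h3]
          have h4 : dist (ξ s).1 xlim ≤ E * Real.exp (-B₂) * Real.exp (u s) := by
            have h6 := mul_le_mul_of_nonneg_left h2 hEpos.le
            calc dist (ξ s).1 xlim ≤ E * Real.exp (-s) := h1
              _ ≤ E * (Real.exp (-B₂) * Real.exp (u s)) := h6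
              _ = E * Real.exp (-B₂) * Real.exp (u s) := by ring
          have h5 : E * Real.exp (-B₂) + 1 ≤ Bdn := by
            rw [hBdn_def]
            linarith [hBdn_pos3, hBdn_pos4, Real.exp_pos B₁, hEpos]
          have h7 := mul_le_mul_of_nonneg_right h5 (Real.exp_pos (u s)).le
          have h8 : (E * Real.exp (-B₂) + 1) * Real.exp (u s)
              = E * Real.exp (-B₂) * Real.exp (u s) + Real.exp (u s) := by ring
          linarith
        · rw [not_le] at hus
          refine ⟨(xlim, Real.exp (-0)), ⟨0, Set.self_mem_Ici, rfl⟩, ?_⟩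
          rw [hexp s hs, neg_zero]
          apply dCon_le_aux
          have hmx : max (Real.exp (u s)) (Real.exp 0) = Real.exp (u s) :=
            max_eq_left (Real.exp_le_exp.2 (by linarith))
          rw [hmx]
          have h1 : dist (ξ s).1 xlim ≤ E * Real.exp (-s) := hlim s hsm
          have h2 : Real.exp (-s) ≤ 1 := Real.exp_le_one_iff.mpr (by linarith)
          have h3 : Real.exp (u s) ≤ Real.exp B₁ := by
            apply Real.exp_le_exp.2
            have := hS1 s hsm
            have hs0 : 0 ≤ s := hs
            linarith
          have h4 : (1:ℝ) ≤ Real.exp ((u s + 0) / 2) :=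
            Real.one_le_exp (by linarith)
          have h5 : E + Real.exp B₁ ≤ Bdn := by
            rw [hBdn_def]
            have := mul_nonneg hEpos.le (Real.exp_pos (-B₂)).le
            linarith [hBdn_pos3, hBdn_pos4]
          have h6 : dist (ξ s).1 xlim + Real.exp (u s) ≤ E + Real.exp B₁ := by
            have h9 := mul_le_mul_of_nonneg_left h2 hEpos.le
            have h10 : E * 1 = E := by ring
            linarith only [h1, h9, h3, h10]
          calc dist (ξ s).1 xlim + Real.exp (u s) ≤ E + Real.exp B₁ := h6
            _ = (E + Real.exp B₁) * 1 := by ring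
            _ ≤ Bdn * Real.exp ((u s + 0) / 2) := by
                apply mul_le_mul h5 h4 zero_le_one
                rw [hBdn_def]; positivity
      · rw [not_le] at hsm
        refine ⟨(xlim, Real.exp (-0)), ⟨0, Set.self_mem_Ici, rfl⟩, ?_⟩
        rw [hexp s hs, neg_zero]
        apply dCon_le_aux
        have hu0s : u s ≤ u 0 + s + C := by
          have := (lip 0 le_rfl s hs).1; linarith
        have hu0s' : u 0 - s - C ≤ u s := by
          have := (lip 0 le_rfl s hs).2.1; linarith
        have hd1 : dist (ξ s).1 (ξ m).1 ≤ Real.exp (u 0 + m + 2 * C) := by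
          have := (lip s hs m hsm.le).2.2
          calc dist (ξ s).1 (ξ m).1 ≤ Real.exp (u s + (m - s) + C) := this
            _ ≤ Real.exp (u 0 + m + 2 * C) := Real.exp_le_exp.2 (by linarith)
        have hd2 : dist (ξ m).1 xlim ≤ E := by
          have h1 := hlim m le_rfl
          have h2 : Real.exp (-m) ≤ 1 := Real.exp_le_one_iff.mpr (by linarith)
          have h3 := mul_le_mul_of_nonneg_left h2 hEpos.le
          have h4 : E * 1 = E := by ring
          linarith only [h1, h3, h4]
        have hd : dist (ξ s).1 xlim ≤ Real.exp (u 0 + m + 2 * C) + E := by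
          have := dist_triangle (ξ s).1 (ξ m).1 xlim
          linarith
        have hmx : max (Real.exp (u s)) (Real.exp 0)
            ≤ Real.exp (u 0 + m + C) + 1 := by
          apply max_le
          · have : Real.exp (u s) ≤ Real.exp (u 0 + m + C) :=
              Real.exp_le_exp.2 (by linarith)
            linarith only [this]
          · rw [Real.exp_zero]
            linarith only [Real.exp_pos (u 0 + m + C)]
        have hlow : Real.exp ((u 0 - m - C) / 2) ≤ Real.exp ((u s + 0) / 2) :=
          Real.exp_le_exp.2 (by linarith)
        have hprod : Real.exp ((m + C - u 0) / 2) * Real.exp ((u 0 - m - C) / 2) = 1 := by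
          rw [← Real.exp_add]
          rw [show (m + C - u 0) / 2 + (u 0 - m - C) / 2 = 0 by ring, Real.exp_zero]
        set N := Real.exp (u 0 + m + 2 * C) + E + Real.exp (u 0 + m + C) + 1 with hN_def
        have hNpos : 0 < N := by positivity
        have hstep1 : dist (ξ s).1 xlim + max (Real.exp (u s)) (Real.exp 0) ≤ N := by
          rw [hN_def]; linarith
        have hstep2 : N ≤ N * Real.exp ((m + C - u 0) / 2) * Real.exp ((u s + 0) / 2) := by
          have h7 : N * (Real.exp ((m + C - u 0) / 2) * Real.exp ((u 0 - m - C) / 2)) = N := by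
            rw [hprod]; ring
          have h8 := mul_le_mul_of_nonneg_left hlow
            (mul_pos hNpos (Real.exp_pos ((m + C - u 0) / 2))).le
          linarith only [h7, h8]
        have hstep3 : N * Real.exp ((m + C - u 0) / 2) ≤ Bdn := by
          rw [hBdn_def, hN_def]
          linarith only [mul_pos hEpos (Real.exp_pos (-B₂)), hEpos, Real.exp_pos B₁,
            hBdn_pos4]
        calc dist (ξ s).1 xlim + max (Real.exp (u s)) (Real.exp 0)
            ≤ N * Real.exp ((m + C - u 0) / 2) * Real.exp ((u s + 0) / 2) := by linarith
          _ ≤ Bdn * Real.exp ((u s + 0) / 2) :=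
              mul_le_mul_of_nonneg_right hstep3 (Real.exp_pos _).le
    · -- backward
      rintro q ⟨σ, hσ, rfl⟩
      have hσ : (0:ℝ) ≤ σ := hσ
      set s := σ + m' with hs_def
      have hms : m ≤ s := by rw [hs_def]; linarith
      have hs : (0:ℝ) ≤ s := by rw [hs_def]; linarith
      clear_value s
      refine ⟨ξ s, ⟨s, Set.mem_Ici.mpr hs, rfl⟩, ?_⟩
      rw [hexp s hs]
      apply dCon_le_aux
      have hus1 : u s ≤ -σ := by
        have h := hS1 s hms
        linarith [hs_def, hB₁m']
      have hus2 : B₂ - m' - σ ≤ u s := by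
        have h := hS2 s hms
        linarith [hs_def]
      have hmx : max (Real.exp (u s)) (Real.exp (-σ)) = Real.exp (-σ) :=
        max_eq_right (Real.exp_le_exp.2 hus1)
      rw [hmx]
      have h1 : dist (ξ s).1 xlim ≤ E * Real.exp (-σ) := by
        have h := hlim s hms
        have h2 : Real.exp (-s) ≤ Real.exp (-σ) :=
          Real.exp_le_exp.2 (by linarith [hs_def])
        have h3 := mul_le_mul_of_nonneg_left h2 hEpos.le
        linarith
      have h3 : Real.exp (-σ) ≤ Real.exp ((m' - B₂) / 2) * Real.exp ((u s + -σ) / 2) := by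
        rw [← Real.exp_add]
        apply Real.exp_le_exp.2
        linarith
      have h4 : (E + 1) * Real.exp ((m' - B₂) / 2) ≤ Bdn := by
        rw [hBdn_def]
        linarith only [mul_pos hEpos (Real.exp_pos (-B₂)), hEpos, Real.exp_pos B₁,
          hBdn_pos3]
      calc dist (ξ s).1 xlim + Real.exp (-σ)
          ≤ (E + 1) * Real.exp (-σ) := by
            have h5 : (E + 1) * Real.exp (-σ) = E * Real.exp (-σ) + Real.exp (-σ) := by ring
            linarith only [h1, h5]
        _ ≤ (E + 1) * (Real.exp ((m' - B₂) / 2) * Real.exp ((u s + -σ) / 2)) :=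
            mul_le_mul_of_nonneg_left h3 (by positivity)
        _ = (E + 1) * Real.exp ((m' - B₂) / 2) * Real.exp ((u s + -σ) / 2) := by ring
        _ ≤ Bdn * Real.exp ((u s + -σ) / 2) :=
            mul_le_mul_of_nonneg_right h4 (Real.exp_pos _).le
end

section
/- For all C ≥ 0 and δ ≥ 0 there exists δ′ ≥ 0 such that the following holds: if X is a C-roughly geodesic δ-hyperbolic metric space, then for all x, y, z ∈ X and all C-rough geodesics ξ₁ from x to y, ξ₂ from y to z, and ξ₃ from x to z, the image of ξ₃ is contained in the closed δ′-neighborhood of (image ξ₁) ∪ (image ξ₂); that is, all C-rough geodesic triangles in X are δ′-thin. -/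
/-! Every point `w = ξ₃ s` of the side from `x` to `z` has Gromov product `(x|z)_w ≤ C`, so by
hyperbolicity one of `(x|y)_w`, `(y|z)_w` is at most `C + δ`. A point `w` with small `(a|b)_w` is
close to any rough geodesic from `a` to `b`: the point `p` of it at distance `(w|b)_a` from `a`
satisfies `d(w,p) ≤ (a|b)_w + C + 2δ`, again by hyperbolicity, now applied to `a, p, b` based
at `w`. -/

/-- `ξ` is a `C`-rough geodesic from `x` to `y`, defined on `[0, d(x,y)]`. -/
def IsRoughGeodBetween (C : ℝ) {X : Type*} [MetricSpace X] (ξ : ℝ → X) (x y : X) : Prop :=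
  ξ 0 = x ∧ ξ (dist x y) = y ∧
  ∀ s ∈ Set.Icc (0 : ℝ) (dist x y), ∀ s' ∈ Set.Icc (0 : ℝ) (dist x y),
    |s - s'| - C ≤ dist (ξ s) (ξ s') ∧ dist (ξ s) (ξ s') ≤ |s - s'| + C

variable {X : Type*} [MetricSpace X]

/-- `gromovProd w x x'` is the Gromov product `(x|x')_w`, based at `w`. -/
noncomputable def gromovProd (w x x' : X) : ℝ := (dist x w + dist w x' - dist x x') / 2

def IsGromovHyperbolic (δ : ℝ) (X : Type*) [MetricSpace X] : Prop :=
  ∀ x x' x'' y : X, gromovProd y x x'' ≥ min (gromovProd y x x') (gromovProd y x' x'') - δ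

namespace IsRoughGeodBetween

variable {C : ℝ} {ξ : ℝ → X} {x y : X} {s : ℝ}

theorem dist_start_le (hξ : IsRoughGeodBetween C ξ x y) (hs : s ∈ Set.Icc 0 (dist x y)) :
    dist (ξ s) x ≤ s + C := by
  obtain ⟨h0, -, hgeo⟩ := hξ
  have h := (hgeo s hs 0 ⟨le_rfl, dist_nonneg⟩).2
  rwa [h0, sub_zero, abs_of_nonneg hs.1] at h

theorem dist_end_le (hξ : IsRoughGeodBetween C ξ x y) (hs : s ∈ Set.Icc 0 (dist x y)) :
    dist (ξ s) y ≤ dist x y - s + C := by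
  obtain ⟨-, hd, hgeo⟩ := hξ
  have h := (hgeo s hs (dist x y) ⟨dist_nonneg, le_rfl⟩).2
  rwa [hd, abs_of_nonpos (sub_nonpos.2 hs.2), neg_sub] at h

theorem gromovProd_le (hξ : IsRoughGeodBetween C ξ x y) (hs : s ∈ Set.Icc 0 (dist x y)) :
    gromovProd (ξ s) x y ≤ C := by
  have h₁ := hξ.dist_start_le hs
  have h₂ := hξ.dist_end_le hs
  rw [gromovProd, dist_comm x]
  linarith

theorem exists_dist_le_gromovProd {δ : ℝ} (hyp : IsGromovHyperbolic δ X)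
    (hξ : IsRoughGeodBetween C ξ x y) (w : X) :
    ∃ p ∈ ξ '' Set.Icc 0 (dist x y), dist w p ≤ gromovProd w x y + C + 2 * δ := by
  obtain ⟨t, ht_eq⟩ : ∃ t, t = gromovProd x w y := ⟨_, rfl⟩
  have ht : t ∈ Set.Icc 0 (dist x y) := by
    rw [ht_eq, gromovProd]
    constructor <;> linarith [dist_triangle w x y, dist_triangle x y w, dist_comm w x, dist_comm y w]
  have hpx := hξ.dist_start_le ht
  have hpy := hξ.dist_end_le ht
  refine ⟨ξ t, ⟨t, ht, rfl⟩, ?_⟩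
  generalize ξ t = p at hpx hpy ⊢
  have hwxp : (gromovProd w x y + dist w p - C) / 2 ≤ gromovProd w x p := by
    simp only [gromovProd] at ht_eq ⊢
    linarith [dist_comm w x, dist_comm x p]
  have hwpy : (gromovProd w x y + dist w p - C) / 2 ≤ gromovProd w p y := by
    simp only [gromovProd] at ht_eq ⊢
    linarith [dist_comm w x, dist_comm y w, dist_comm p w]
  linarith [hyp x p y w, le_min hwxp hwpy]

end IsRoughGeodBetween

/-- For all `C ≥ 0` and `δ ≥ 0` there exists `δ′ ≥ 0` such that: in every `C`-roughly
geodesic `δ`-hyperbolic metric space, every `C`-rough geodesic triangle is `δ′`-thin: for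
rough geodesics `ξ₁` from `x` to `y`, `ξ₂` from `y` to `z`, `ξ₃` from `x` to `z`, the image
of `ξ₃` lies in the closed `δ′`-neighborhood of the union of the images of `ξ₁` and `ξ₂`. -/
theorem stmt_9 (C δ : ℝ) (hC : 0 ≤ C) (hδ : 0 ≤ δ) :
    ∃ δ' : ℝ, 0 ≤ δ' ∧
      ∀ (X : Type) [MetricSpace X],
        (∀ x y : X, ∃ ξ : ℝ → X, IsRoughGeodBetween C ξ x y) →
        (∀ x x' x'' y : X,
          (dist x y + dist y x'' - dist x x'') / 2 ≥
            min ((dist x y + dist y x' - dist x x') / 2)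
                ((dist x' y + dist y x'' - dist x' x'') / 2) - δ) →
        ∀ (x y z : X) (ξ₁ ξ₂ ξ₃ : ℝ → X),
          IsRoughGeodBetween C ξ₁ x y → IsRoughGeodBetween C ξ₂ y z →
          IsRoughGeodBetween C ξ₃ x z →
          ∀ s ∈ Set.Icc (0 : ℝ) (dist x z),
            ∃ p ∈ (ξ₁ '' Set.Icc (0 : ℝ) (dist x y)) ∪ (ξ₂ '' Set.Icc (0 : ℝ) (dist y z)),
              dist (ξ₃ s) p ≤ δ' := by
  refine ⟨2 * C + 3 * δ, by positivity, ?_⟩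
  intro X _ _ hyp x y z ξ₁ ξ₂ ξ₃ h₁ h₂ h₃ s hs
  have hxz := h₃.gromovProd_le hs
  have hmin : gromovProd (ξ₃ s) x z ≥ min (gromovProd (ξ₃ s) x y) (gromovProd (ξ₃ s) y z) - δ :=
    hyp x y z (ξ₃ s)
  rcases le_total (gromovProd (ξ₃ s) x y) (gromovProd (ξ₃ s) y z) with hc | hc
  · obtain ⟨p, hp, hdp⟩ := h₁.exists_dist_le_gromovProd hyp (ξ₃ s)
    rw [min_eq_left hc] at hmin
    exact ⟨p, Or.inl hp, by linarith⟩
  · obtain ⟨p, hp, hdp⟩ := h₂.exists_dist_le_gromovProd hyp (ξ₃ s)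
    rw [min_eq_right hc] at hmin
    exact ⟨p, Or.inr hp, by linarith⟩
end

section
/- (Normalization Lemma) Let (H,d_H) possess a stacked tiling with data (Γ, K, α, a, Γ′). Then every tile Q ∈ 𝒬 can be written as Q = g·(γ′·Q₀) for some g ∈ Γ_α and γ′ ∈ Γ′ such that g is a combinatorial isometry with respect to γ′·Q₀: for every tile Q′ ∈ 𝒬 with Q′ ∩ (γ′·Q₀) ≠ ∅, the image g·Q′ is again a tile of 𝒬. -/
/-- A stacked tiling on a complete metric space `H` homeomorphic to `ℝⁿ`: a discrete
co-compact group `Γ` of isometries with compact connected fundamental domain `K`, and a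
homothety `alpha` of factor `a > 1` normalizing `Γ`, such that `alpha K` is tiled by the
translates of `K` under a finite set `Γ′ ⊆ Γ`. -/
structure StackedTiling (H : Type*) [MetricSpace H] where
  n : ℕ
  homeo : H ≃ₜ EuclideanSpace ℝ (Fin n)
  Γ : Subgroup (H ≃ᵢ H)
  K : Set H
  alpha : Equiv.Perm H
  a : ℝ
  ha : 1 < a
  halpha : ∀ x y : H, dist (alpha x) (alpha y) = a * dist x y
  properAction : ∀ L : Set H, IsCompact L →
    {γ : H ≃ᵢ H | γ ∈ Γ ∧ ((⇑γ '' L) ∩ L).Nonempty}.Finite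
  hKcpt : IsCompact K
  hKconn : IsConnected K
  hcover : (⋃ γ ∈ Γ, ⇑γ '' K) = Set.univ
  hdisjInt : ∀ γ ∈ Γ, γ ≠ 1 → interior K ∩ interior (⇑γ '' K) = ∅
  hconj : ∀ γ ∈ Γ, ∃ γ₁ ∈ Γ, ∀ x : H, alpha (γ x) = γ₁ (alpha x)
  Γ' : Finset (H ≃ᵢ H)
  hΓ'sub : ∀ γ' ∈ Γ', γ' ∈ Γ
  hstacked : ⇑alpha '' K = ⋃ γ' ∈ Γ', ⇑γ' '' K

/-- The action of the element `alphaᵐ·γ` of the semigroup `Γ_α` on `H × (0,∞)`: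
`(x,t) ↦ (alphaᵐ(γ x), aᵐ·t)`. -/
noncomputable def tileAct {H : Type*} [MetricSpace H] (T : StackedTiling H)
    (m : ℤ) (γ : H ≃ᵢ H) (p : H × ℝ) : H × ℝ :=
  ((T.alpha ^ m) (γ p.1), T.a ^ m * p.2)

/-- The fundamental tile `Q₀ = K × [1,a]`. -/
def fundTile {H : Type*} [MetricSpace H] (T : StackedTiling H) : Set (H × ℝ) :=
  T.K ×ˢ Set.Icc 1 T.a

/-- `Q` is a tile of `𝒬 = {g·Q₀ : g ∈ Γ_α}`. -/
def IsTile {H : Type*} [MetricSpace H] (T : StackedTiling H) (Q : Set (H × ℝ)) : Prop :=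
  ∃ m : ℤ, ∃ γ ∈ T.Γ, Q = tileAct T m γ '' fundTile T

/-!
Since `alpha` normalizes `Γ`, the translates `γ₂ (γ' K)` with `γ' ∈ Γ'` and `γ₂ ∈ Γ ∩ alpha Γ alpha⁻¹`
cover `H`: they are the pieces of the tiles `alpha (δ K)`. By Baire, the union of their interiors
is dense, so every open set `interior (γ K)` meets one of them, and disjointness of interiors forces
`γ K = γ₂ (γ' K)`. A tile meeting `γ' Q₀` lies at a level `k ∈ {-1, 0, 1}`, and for these `k`
we have `γ₂ alphaᵏ = alphaᵏ δ` with `δ ∈ Γ`; hence `alphaᵐ γ₂` maps such tiles to tiles.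
-/

open Set

theorem IsometryEquiv.image_interior {X Y : Type*} [PseudoEMetricSpace X] [PseudoEMetricSpace Y]
    (e : X ≃ᵢ Y) (s : Set X) : e '' interior s = interior (e '' s) :=
  e.toHomeomorph.image_interior s

theorem mem_Icc_of_zpow_mul_eq {a : ℝ} (ha : 1 < a) {m : ℤ} {s t : ℝ} (hs : s ∈ Icc 1 a)
    (ht : t ∈ Icc 1 a) (h : a ^ m * s = t) : m ∈ Icc (-1) 1 := by
  have hpos : 0 < a ^ m := zpow_pos (zero_lt_one.trans ha) m
  constructor
  · have : a ^ (-1 : ℤ) ≤ a ^ m := by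
      rw [zpow_neg_one, inv_le_iff_one_le_mul₀' (zero_lt_one.trans ha)]
      nlinarith [hs.2, ht.1]
    exact (zpow_le_zpow_iff_right₀ ha).mp this
  · have : a ^ m ≤ a ^ (1 : ℤ) := by
      rw [zpow_one]
      nlinarith [hs.1, ht.2]
    exact (zpow_le_zpow_iff_right₀ ha).mp this

namespace StackedTiling

variable {H : Type*} [MetricSpace H] (T : StackedTiling H)

/-- `Γ ∩ alpha Γ alpha⁻¹`. -/
def alphaConj : Set (H ≃ᵢ H) :=
  {γ₂ | γ₂ ∈ T.Γ ∧ ∃ δ ∈ T.Γ, ∀ x, T.alpha (δ x) = γ₂ (T.alpha x)}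

theorem eq_of_inter_interior_nonempty {γ η : H ≃ᵢ H} (hγ : γ ∈ T.Γ) (hη : η ∈ T.Γ)
    (h : (interior (γ '' T.K) ∩ interior (η '' T.K)).Nonempty) : γ = η := by
  by_contra hne
  have hne' : γ⁻¹ * η ≠ 1 := fun h1 => hne (inv_mul_eq_one.mp h1)
  obtain ⟨x, hxγ, hxη⟩ := h
  have hdisj := T.hdisjInt _ (mul_mem (inv_mem hγ) hη) hne'
  rw [← γ.image_interior] at hxγ
  obtain ⟨y, hy, rfl⟩ := hxγ
  refine (eq_empty_iff_forall_notMem.mp hdisj) y ⟨hy, ?_⟩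
  have himg : ⇑(γ⁻¹ * η) '' T.K = γ.symm '' (η '' T.K) := by
    rw [image_image]; rfl
  rw [himg, ← IsometryEquiv.image_interior]
  exact ⟨γ y, hxη, γ.symm_apply_apply y⟩

theorem finite_setOf_image_inter_nonempty {L : Set H} (hL : IsCompact L) :
    {γ : H ≃ᵢ H | γ ∈ T.Γ ∧ (γ '' T.K ∩ L).Nonempty}.Finite := by
  refine (T.properAction (T.K ∪ L) (T.hKcpt.union hL)).subset ?_
  rintro γ ⟨hγ, x, hxK, hxL⟩
  exact ⟨hγ, x, image_mono subset_union_left hxK, subset_union_right hxL⟩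

theorem countable_Γ : (T.Γ : Set (H ≃ᵢ H)).Countable := by
  have : SigmaCompactSpace H := T.homeo.isClosedEmbedding.sigmaCompactSpace
  obtain ⟨x, hx⟩ := T.hKconn.nonempty
  refine Set.Countable.mono (fun γ hγ => ?_) (countable_iUnion fun n =>
    (T.finite_setOf_image_inter_nonempty (isCompact_compactCovering H n)).countable)
  obtain ⟨n, hn⟩ := exists_mem_compactCovering (γ x)
  exact mem_iUnion.mpr ⟨n, hγ, γ x, mem_image_of_mem γ hx, hn⟩

theorem iUnion_alphaConj_prod_image_eq_univ :
    ⋃ p ∈ T.alphaConj ×ˢ (T.Γ' : Set (H ≃ᵢ H)), (p.1 * p.2) '' T.K = univ := by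
  refine eq_univ_of_forall fun x => ?_
  obtain ⟨δ, hδ, k, hk, hδk⟩ := mem_iUnion₂.mp (T.hcover ▸ mem_univ (T.alpha.symm x))
  obtain ⟨γ₂, hγ₂, hcomm⟩ := T.hconj δ hδ
  have hαk : T.alpha k ∈ ⋃ γ' ∈ T.Γ', ⇑γ' '' T.K := T.hstacked ▸ mem_image_of_mem _ hk
  obtain ⟨γ', hγ', hk'⟩ := mem_iUnion₂.mp hαk
  have hx : γ₂ (T.alpha k) = x := by rw [← hcomm, hδk, Equiv.apply_symm_apply]
  refine mem_iUnion₂.mpr ⟨(γ₂, γ'), ⟨⟨hγ₂, δ, hδ, hcomm⟩, hγ'⟩, ?_⟩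
  rw [IsometryEquiv.coe_mul, image_comp, ← hx]
  exact mem_image_of_mem γ₂ hk'

theorem exists_alphaConj_image_eq [CompleteSpace H] {γ : H ≃ᵢ H} (hγ : γ ∈ T.Γ) :
    ∃ γ₂ ∈ T.alphaConj, ∃ γ' ∈ T.Γ', γ '' T.K = (γ₂ * γ') '' T.K := by
  have hΓ : ∀ p ∈ T.alphaConj ×ˢ (T.Γ' : Set (H ≃ᵢ H)), p.1 * p.2 ∈ T.Γ :=
    fun p hp => mul_mem hp.1.1 (T.hΓ'sub _ hp.2)
  have hdense := dense_biUnion_interior_of_closed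
    (fun p _ => (T.hKcpt.image (p.1 * p.2).continuous).isClosed)
    ((T.countable_Γ.mono fun _ h => h.1).prod T.Γ'.countable_toSet)
    T.iUnion_alphaConj_prod_image_eq_univ
  have : Nonempty H := T.hKconn.nonempty.to_type
  have hK : (interior T.K).Nonempty := by
    obtain ⟨p, -, hp⟩ := nonempty_biUnion.mp hdense.nonempty
    rw [← IsometryEquiv.image_interior] at hp
    exact hp.of_image
  have hγK : (interior (γ '' T.K)).Nonempty := by
    rw [← γ.image_interior]
    exact hK.image _
  obtain ⟨x, hxγ, hx⟩ := hdense.inter_open_nonempty _ isOpen_interior hγK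
  obtain ⟨p, hp, hxp⟩ := mem_iUnion₂.mp hx
  obtain rfl := T.eq_of_inter_interior_nonempty hγ (hΓ p hp) ⟨x, hxγ, hxp⟩
  exact ⟨p.1, hp.1, p.2, hp.2, rfl⟩

theorem exists_comm_alpha_zpow {γ₂ : H ≃ᵢ H} (hγ₂ : γ₂ ∈ T.alphaConj) {m : ℤ}
    (hm : m ∈ Icc (-1) 1) : ∃ δ ∈ T.Γ, ∀ x, γ₂ ((T.alpha ^ m) x) = (T.alpha ^ m) (δ x) := by
  obtain ⟨hγ₂Γ, δ, hδ, hcomm⟩ := hγ₂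
  obtain ⟨hm₁, hm₂⟩ := hm
  obtain rfl | rfl | rfl : m = -1 ∨ m = 0 ∨ m = 1 := by omega
  · obtain ⟨γ₃, hγ₃, hcomm₃⟩ := T.hconj γ₂ hγ₂Γ
    refine ⟨γ₃, hγ₃, fun x => T.alpha.injective ?_⟩
    simp only [zpow_neg, zpow_one, Equiv.Perm.inv_def, hcomm₃, Equiv.apply_symm_apply]
  · exact ⟨γ₂, hγ₂Γ, fun x => rfl⟩
  · exact ⟨δ, hδ, fun x => by simp only [zpow_one, hcomm]⟩

theorem tileAct_image_tileAct {m m' : ℤ} {γ η δ : H ≃ᵢ H}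
    (h : ∀ x, γ ((T.alpha ^ m') x) = (T.alpha ^ m') (δ x)) (s : Set (H × ℝ)) :
    tileAct T m γ '' (tileAct T m' η '' s) = tileAct T (m + m') (δ * η) '' s := by
  have ha : T.a ≠ 0 := (zero_lt_one.trans T.ha).ne'
  rw [image_image]
  refine image_congr fun p _ => ?_
  simp only [tileAct, h, zpow_add, zpow_add₀ ha, Equiv.Perm.mul_apply, IsometryEquiv.mul_apply,
    mul_assoc]

theorem tileAct_image_fundTile_congr {m : ℤ} {γ η : H ≃ᵢ H} (h : γ '' T.K = η '' T.K) :
    tileAct T m γ '' fundTile T = tileAct T m η '' fundTile T := by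
  have hprod : ∀ ζ : H ≃ᵢ H, tileAct T m ζ '' fundTile T =
      ((T.alpha ^ m) '' (ζ '' T.K)) ×ˢ ((T.a ^ m * ·) '' Icc 1 T.a) := fun ζ => by
    rw [image_image, prod_image_image_eq]; rfl
  rw [hprod, hprod, h]

theorem level_mem_Icc_of_inter_nonempty {m : ℤ} {η γ' : H ≃ᵢ H}
    (h : (tileAct T m η '' fundTile T ∩ tileAct T 0 γ' '' fundTile T).Nonempty) :
    m ∈ Icc (-1) 1 := by
  obtain ⟨p, ⟨q, hq, rfl⟩, ⟨r, hr, hrq⟩⟩ := h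
  have ht : T.a ^ (0 : ℤ) * r.2 = T.a ^ m * q.2 := congrArg Prod.snd hrq
  rw [zpow_zero, one_mul] at ht
  exact mem_Icc_of_zpow_mul_eq T.ha hq.2 hr.2 ht.symm

theorem isTile_image_tileAct {γ₂ η : H ≃ᵢ H} (hγ₂ : γ₂ ∈ T.alphaConj) (hη : η ∈ T.Γ)
    (m : ℤ) {m' : ℤ} (hm' : m' ∈ Icc (-1) 1) :
    IsTile T (tileAct T m γ₂ '' (tileAct T m' η '' fundTile T)) := by
  obtain ⟨δ, hδ, hcomm⟩ := T.exists_comm_alpha_zpow hγ₂ hm'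
  exact ⟨m + m', δ * η, mul_mem hδ hη, T.tileAct_image_tileAct hcomm _⟩

end StackedTiling

/-- (Normalization Lemma) Every tile `Q ∈ 𝒬` can be written as `Q = g·(γ′·Q₀)` with
`g ∈ Γ_α` and `γ′ ∈ Γ′`, where `g` is a combinatorial isometry with respect to `γ′·Q₀`:
for every tile `Q′` meeting `γ′·Q₀`, the image `g·Q′` is again a tile. -/
theorem stmt_11 {H : Type*} [MetricSpace H] [CompleteSpace H] (T : StackedTiling H)
    (Q : Set (H × ℝ)) (hQ : IsTile T Q) :
    ∃ (m : ℤ) (γ : H ≃ᵢ H), γ ∈ T.Γ ∧ ∃ γ' ∈ T.Γ',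
      Q = tileAct T m γ '' (tileAct T 0 γ' '' fundTile T) ∧
      ∀ Q' : Set (H × ℝ), IsTile T Q' → (Q' ∩ (tileAct T 0 γ' '' fundTile T)).Nonempty →
        IsTile T (tileAct T m γ '' Q') := by
  obtain ⟨m, γ, hγ, rfl⟩ := hQ
  obtain ⟨γ₂, hγ₂, γ', hγ', hK⟩ := T.exists_alphaConj_image_eq hγ
  refine ⟨m, γ₂, hγ₂.1, γ', hγ', ?_, ?_⟩
  · rw [T.tileAct_image_tileAct (m' := 0) (δ := γ₂) (fun _ => rfl), add_zero]
    exact T.tileAct_image_fundTile_congr hK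
  · rintro _ ⟨m', η, hη, rfl⟩ hne
    exact T.isTile_image_tileAct hγ₂ hη m (T.level_mem_Icc_of_inter_nonempty hne)
end

section
/- Let (H,d_H) possess a stacked tiling with data (Γ, K, α, a, Γ′), and let d be a metric on X = H × (0,∞) that induces the product topology and for which every element of Γ_α acts as an isometry of (X,d). Assume the family of tiles 𝒬 is locally finite in (X,d). Let 𝒬 = 𝒬₁ ⊔ … ⊔ 𝒬_N be a coloring (tiles of the same color are pairwise disjoint), inducing a partition Γ_α = Γ₁ ⊔ … ⊔ Γ_N via g ↦ g·Q₀. Then there exists an open set U ⊆ X containing Q₀ such that for every color i and all distinct g, h ∈ Γ_i, g·U ∩ h·U = ∅. -/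
/-- The `Γ_α`-action restricted to the subtype `X = H × (0,∞)`. -/
noncomputable def tileActS {H : Type*} [MetricSpace H] (T : StackedTiling H)
    (m : ℤ) (γ : H ≃ᵢ H) (p : {p : H × ℝ // 0 < p.2}) : {p : H × ℝ // 0 < p.2} :=
  ⟨tileAct T m γ p.val,
    mul_pos (zpow_pos (lt_trans one_pos T.ha) m) p.prop⟩

section Aux

variable {H : Type*} [MetricSpace H]

/-- Conjugation of `Γ` by nonnegative powers of `alpha` stays in `Γ`. -/
lemma stmt12_conj_pow (T : StackedTiling H) :
    ∀ (n : ℕ), ∀ γ ∈ T.Γ, ∃ c ∈ T.Γ, ∀ x, (T.alpha ^ n) (γ x) = c ((T.alpha ^ n) x) := by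
  intro n
  induction n with
  | zero =>
    intro γ hγ
    exact ⟨γ, hγ, fun x => by simp⟩
  | succ n ih =>
    intro γ hγ
    obtain ⟨c, hc, h⟩ := ih γ hγ
    obtain ⟨c₁, hc₁, h₁⟩ := T.hconj c hc
    refine ⟨c₁, hc₁, fun x => ?_⟩
    rw [pow_succ' T.alpha n, Equiv.Perm.mul_apply, Equiv.Perm.mul_apply, h, h₁]

/-- Conjugation form for nonpositive integer powers of `alpha`. -/
lemma stmt12_conj_zpow (T : StackedTiling H) {k : ℤ} (hk : k ≤ 0) {γ : H ≃ᵢ H}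
    (hγ : γ ∈ T.Γ) : ∃ c ∈ T.Γ, ∀ x, γ ((T.alpha ^ k) x) = (T.alpha ^ k) (c x) := by
  obtain ⟨c, hc, h⟩ := stmt12_conj_pow T (-k).toNat γ hγ
  have hcast : ((-k).toNat : ℤ) = -k := Int.toNat_of_nonneg (by omega)
  have h4 : ∀ z, (T.alpha ^ (-k)) ((T.alpha ^ k) z) = z := fun z => by
    rw [← Equiv.Perm.mul_apply, ← zpow_add, neg_add_cancel, zpow_zero, Equiv.Perm.one_apply]
  have h5 : ∀ z, (T.alpha ^ k) ((T.alpha ^ (-k)) z) = z := fun z => by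
    rw [← Equiv.Perm.mul_apply, ← zpow_add, add_neg_cancel, zpow_zero, Equiv.Perm.one_apply]
  refine ⟨c, hc, fun x => ?_⟩
  have h2 : ∀ y, (T.alpha ^ (-k)) (γ y) = c ((T.alpha ^ (-k)) y) := by
    intro y
    rw [← hcast, zpow_natCast]
    exact h y
  have h3 := h2 ((T.alpha ^ k) x)
  rw [h4] at h3
  calc γ ((T.alpha ^ k) x)
      = (T.alpha ^ k) ((T.alpha ^ (-k)) (γ ((T.alpha ^ k) x))) := (h5 _).symm
    _ = (T.alpha ^ k) (c x) := by rw [h3]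

/-- Composition of `tileActS` with a pure `alpha`-power. -/
lemma stmt12_comp_one (T : StackedTiling H) (m m' : ℤ) (γ : H ≃ᵢ H)
    (x : {p : H × ℝ // 0 < p.2}) :
    tileActS T m 1 (tileActS T m' γ x) = tileActS T (m + m') γ x := by
  have ha0 : (0 : ℝ) < T.a := lt_trans one_pos T.ha
  apply Subtype.ext
  show tileAct T m 1 (tileAct T m' γ x.val) = tileAct T (m + m') γ x.val
  unfold tileAct
  simp only [Prod.mk.injEq, IsometryEquiv.coe_one, id_eq]
  constructor
  · rw [← Equiv.Perm.mul_apply, ← zpow_add]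
  · rw [← mul_assoc, ← zpow_add₀ (ne_of_gt ha0)]

end Aux


/-- Let `H` possess a stacked tiling and let `d` be a metric on `X = H × (0,∞)` inducing
the product topology, for which `Γ_α` acts by isometries, and suppose the tiles are
locally finite. Given a coloring of the tiles with `N` colors (same-colored distinct tiles
are disjoint), there is an open set `U ⊇ Q₀` such that same-colored distinct translates
`g·U`, `h·U` (for `g, h ∈ Γ_α`) are disjoint. -/
theorem stmt_12 {H : Type*} [MetricSpace H] [CompleteSpace H] (T : StackedTiling H)
    (d : {p : H × ℝ // 0 < p.2} → {p : H × ℝ // 0 < p.2} → ℝ)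
    (hd0 : ∀ p, d p p = 0)
    (hdpos : ∀ p q, p ≠ q → 0 < d p q)
    (hdsymm : ∀ p q, d p q = d q p)
    (hdtri : ∀ p q r, d p r ≤ d p q + d q r)
    (htop : ∀ p : {p : H × ℝ // 0 < p.2},
      (nhds p).HasBasis (fun ε : ℝ => 0 < ε) (fun ε => {q | d p q < ε}))
    (hinv : ∀ (m : ℤ) (γ : H ≃ᵢ H), γ ∈ T.Γ →
      ∀ p q, d (tileActS T m γ p) (tileActS T m γ q) = d p q)
    (hlocfin : ∀ p : {p : H × ℝ // 0 < p.2}, ∃ ε > 0,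
      {Q : Set (H × ℝ) | IsTile T Q ∧
        ∃ q : {p : H × ℝ // 0 < p.2}, q.val ∈ Q ∧ d p q < ε}.Finite)
    (N : ℕ) (col : Set (H × ℝ) → Fin N)
    (hcol : ∀ Q Q' : Set (H × ℝ), IsTile T Q → IsTile T Q' → Q ≠ Q' →
      col Q = col Q' → Q ∩ Q' = ∅) :
    ∃ U : Set (H × ℝ), IsOpen U ∧ U ⊆ {p : H × ℝ | 0 < p.2} ∧ fundTile T ⊆ U ∧
      ∀ (m m' : ℤ) (γ γ' : H ≃ᵢ H), γ ∈ T.Γ → γ' ∈ T.Γ →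
        tileAct T m γ '' fundTile T ≠ tileAct T m' γ' '' fundTile T →
        col (tileAct T m γ '' fundTile T) = col (tileAct T m' γ' '' fundTile T) →
        (tileAct T m γ '' U) ∩ (tileAct T m' γ' '' U) = ∅ := by
    classical
  have ha0 : (0 : ℝ) < T.a := lt_trans one_pos T.ha
  -- basic facts about the fundamental tile
  have hfpos : ∀ z ∈ fundTile T, (0 : ℝ) < z.2 := fun z hz =>
    lt_of_lt_of_le one_pos (Set.mem_Icc.mp (Set.mem_prod.mp hz).2).1
  -- the fundamental tile inside {p : H × ℝ // 0 < p.2}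
  set Q₀S : Set {p : H × ℝ // 0 < p.2} := {x : {p : H × ℝ // 0 < p.2} | x.val ∈ fundTile T} with hQ₀S
  have hball_nhds : ∀ (x : {p : H × ℝ // 0 < p.2}) {r : ℝ}, 0 < r → {y : {p : H × ℝ // 0 < p.2} | d x y < r} ∈ nhds x :=
    fun x _ hr => (htop x).mem_of_mem hr
  -- Q₀S is compact
  have hQ0img : Subtype.val '' Q₀S = fundTile T := by
    ext z
    constructor
    · rintro ⟨y, hy, rfl⟩; exact hy
    · intro hz; exact ⟨⟨z, hfpos z hz⟩, hz, rfl⟩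
  have hQ0cpt : IsCompact Q₀S := by
    rw [Subtype.isCompact_iff, hQ0img]
    exact T.hKcpt.prod isCompact_Icc
  -- Q₀S is nonempty
  obtain ⟨k0, hk0⟩ := T.hKconn.nonempty
  have hx0mem : ((k0, 1) : H × ℝ) ∈ fundTile T :=
    Set.mem_prod.mpr ⟨hk0, Set.mem_Icc.mpr ⟨le_refl 1, T.ha.le⟩⟩
  have hx0 : (⟨(k0, 1), one_pos⟩ : {p : H × ℝ // 0 < p.2}) ∈ Q₀S := hx0mem
  -- tileActS is continuous on {p : H × ℝ // 0 < p.2}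
  have hcont : ∀ (m : ℤ) (γ : H ≃ᵢ H), γ ∈ T.Γ → Continuous (tileActS T m γ) := by
    intro m γ hγ
    rw [continuous_iff_continuousAt]
    intro x
    unfold ContinuousAt
    rw [Filter.HasBasis.tendsto_iff (htop x) (htop (tileActS T m γ x))]
    intro ε hε
    refine ⟨ε, hε, fun y hy => ?_⟩
    show d (tileActS T m γ x) (tileActS T m γ y) < ε
    rw [hinv m γ hγ]
    exact hy
  -- subtype version of tiles
  have htilepre : ∀ (m : ℤ) (γ : H ≃ᵢ H),
      {y : {p : H × ℝ // 0 < p.2} | y.val ∈ tileAct T m γ '' fundTile T} = tileActS T m γ '' Q₀S := by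
    intro m γ
    ext y
    simp only [Set.mem_setOf_eq, Set.mem_image]
    constructor
    · rintro ⟨w, hw, hwy⟩
      exact ⟨⟨w, hfpos w hw⟩, hw, Subtype.ext hwy⟩
    · rintro ⟨x, hx, rfl⟩
      exact ⟨x.val, hx, rfl⟩
  -- local finiteness data
  choose e he hfin using hlocfin
  -- first cover: uniform local finiteness radius around Q₀S
  obtain ⟨t, ht_sub, ht_cover⟩ := hQ0cpt.elim_nhds_subcover
    (fun x => {y : {p : H × ℝ // 0 < p.2} | d x y < e x / 2}) (fun x _ => hball_nhds x (half_pos (he x)))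
  have ht_ne : t.Nonempty := by
    have := ht_cover hx0
    rw [Set.mem_iUnion₂] at this
    obtain ⟨x₀, hx₀, -⟩ := this
    exact ⟨x₀, hx₀⟩
  set ε₀ : ℝ := t.inf' ht_ne (fun x => e x / 2) with hε₀def
  have hε₀pos : 0 < ε₀ := by
    rw [hε₀def, Finset.lt_inf'_iff]
    exact fun x _ => half_pos (he x)
  -- the finite family of tiles near Q₀S
  set F : Set (Set (H × ℝ)) := ⋃ x ∈ (t : Set {p : H × ℝ // 0 < p.2}),
    {Q : Set (H × ℝ) | IsTile T Q ∧ ∃ q : {p : H × ℝ // 0 < p.2}, q.val ∈ Q ∧ d x q < e x} with hFdef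
  have hFfin : F.Finite := Set.Finite.biUnion t.finite_toSet (fun x _ => hfin x)
  have claimA : ∀ Q : Set (H × ℝ), IsTile T Q → ∀ x ∈ Q₀S, ∀ y : {p : H × ℝ // 0 < p.2}, y.val ∈ Q →
      d x y < ε₀ → Q ∈ F := by
    intro Q hQ x hx y hyQ hdxy
    have hc := ht_cover hx
    rw [Set.mem_iUnion₂] at hc
    obtain ⟨x₀, hx₀t, hxb⟩ := hc
    have h1 : d x₀ x < e x₀ / 2 := hxb
    have h2 : ε₀ ≤ e x₀ / 2 := Finset.inf'_le _ hx₀t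
    refine Set.mem_biUnion (Finset.mem_coe.mpr hx₀t) ⟨hQ, y, hyQ, ?_⟩
    calc d x₀ y ≤ d x₀ x + d x y := hdtri _ _ _
      _ < e x₀ := by linarith
  -- the finitely many tiles near Q₀S that are disjoint from the fundamental tile
  set S : Set (Set (H × ℝ)) := {Q | Q ∈ F ∧ Q ∩ fundTile T = ∅} with hSdef
  have hSfin : S.Finite := hFfin.subset (fun Q hQ => hQ.1)
  have hFtile : ∀ Q ∈ F, IsTile T Q := by
    intro Q hQ
    rw [hFdef, Set.mem_iUnion₂] at hQ
    obtain ⟨x, _, hQ'⟩ := hQ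
    exact hQ'.1
  set L : Set {p : H × ℝ // 0 < p.2} := ⋃ Q ∈ S, {y : {p : H × ℝ // 0 < p.2} | y.val ∈ Q} with hLdef
  have hLcpt : IsCompact L := by
    refine Set.Finite.isCompact_biUnion hSfin (fun Q hQ => ?_)
    obtain ⟨m₁, γ₁, hγ₁, hQe⟩ := hFtile Q hQ.1
    rw [hQe, htilepre]
    exact hQ0cpt.image (hcont m₁ γ₁ hγ₁)
  have hLclosed : IsClosed L := hLcpt.isClosed
  have hdisjQL : ∀ x ∈ Q₀S, x ∉ L := by
    intro x hx hxL
    rw [hLdef, Set.mem_iUnion₂] at hxL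
    obtain ⟨Q, hQS, hxQ⟩ := hxL
    exact Set.eq_empty_iff_forall_notMem.mp hQS.2 x.val ⟨hxQ, hx⟩
  -- separation between Q₀S and L
  have hsep : ∀ x : {p : H × ℝ // 0 < p.2}, ∃ r : ℝ, 0 < r ∧ (x ∈ Q₀S → ∀ y ∈ L, ¬ d x y < r) := by
    intro x
    by_cases hx : x ∈ Q₀S
    · have hxL : Lᶜ ∈ nhds x := hLclosed.isOpen_compl.mem_nhds (hdisjQL x hx)
      rw [(htop x).mem_iff] at hxL
      obtain ⟨r, hr, hsub⟩ := hxL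
      exact ⟨r, hr, fun _ y hyL hdy => (hsub hdy) hyL⟩
    · exact ⟨1, one_pos, fun hx' => absurd hx' hx⟩
  choose r hrpos hrL using hsep
  obtain ⟨t₂, ht₂sub, ht₂cov⟩ := hQ0cpt.elim_nhds_subcover
    (fun x => {y : {p : H × ℝ // 0 < p.2} | d x y < r x / 2}) (fun x _ => hball_nhds x (half_pos (hrpos x)))
  have ht₂ne : t₂.Nonempty := by
    have := ht₂cov hx0
    rw [Set.mem_iUnion₂] at this
    obtain ⟨x₀, hx₀, -⟩ := this
    exact ⟨x₀, hx₀⟩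
  set δ : ℝ := t₂.inf' ht₂ne (fun x => r x / 2) with hδdef
  have hδpos : 0 < δ := by
    rw [hδdef, Finset.lt_inf'_iff]
    exact fun x _ => half_pos (hrpos x)
  have hsep2 : ∀ x ∈ Q₀S, ∀ y ∈ L, δ ≤ d x y := by
    intro x hx y hy
    by_contra hcon
    push_neg at hcon
    have hc := ht₂cov hx
    rw [Set.mem_iUnion₂] at hc
    obtain ⟨x₀, hx₀t, hxb⟩ := hc
    have h1 : d x₀ x < r x₀ / 2 := hxb
    have h2 : δ ≤ r x₀ / 2 := Finset.inf'_le _ hx₀t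
    refine hrL x₀ (ht₂sub x₀ hx₀t) y hy ?_
    calc d x₀ y ≤ d x₀ x + d x y := hdtri _ _ _
      _ < r x₀ := by linarith
  -- the final radius
  set ε : ℝ := min ε₀ δ / 2 with hεdef
  have hεpos : 0 < ε := by
    rw [hεdef]
    exact half_pos (lt_min hε₀pos hδpos)
  have h2ε : 2 * ε = min ε₀ δ := by rw [hεdef]; ring
  -- key claim: tiles disjoint from the fundamental tile stay 2ε away from Q₀S
  have keyClaim : ∀ Q : Set (H × ℝ), IsTile T Q → Q ∩ fundTile T = ∅ →
      ∀ x ∈ Q₀S, ∀ y : {p : H × ℝ // 0 < p.2}, y.val ∈ Q → 2 * ε ≤ d x y := by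
    intro Q hQ hQdisj x hx y hy
    by_contra hcon
    push_neg at hcon
    rw [h2ε] at hcon
    have hQF : Q ∈ F := claimA Q hQ x hx y hy (lt_of_lt_of_le hcon (min_le_left _ _))
    have hyL : y ∈ L := by
      rw [hLdef]
      exact Set.mem_biUnion (show Q ∈ S from ⟨hQF, hQdisj⟩) hy
    have := hsep2 x hx y hyL
    have : d x y < δ := lt_of_lt_of_le hcon (min_le_right _ _)
    linarith [hsep2 x hx y hyL]
  -- the open set U
  set U' : Set {p : H × ℝ // 0 < p.2} := {y : {p : H × ℝ // 0 < p.2} | ∃ q ∈ Q₀S, d q y < ε} with hU'def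
  have hU'open : IsOpen U' := by
    rw [isOpen_iff_mem_nhds]
    rintro y ⟨q, hq, hdq⟩
    refine Filter.mem_of_superset (hball_nhds y (show (0:ℝ) < ε - d q y by linarith)) ?_
    intro z hz
    refine ⟨q, hq, ?_⟩
    calc d q z ≤ d q y + d y z := hdtri _ _ _
      _ < ε := by
        have : d y z < ε - d q y := hz
        linarith
  set U : Set (H × ℝ) := Subtype.val '' U' with hUdef
  have hXopen : IsOpen {p : H × ℝ | 0 < p.2} := isOpen_lt continuous_const continuous_snd
  refine ⟨U, ?_, ?_, ?_, ?_⟩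
  · exact hXopen.isOpenMap_subtype_val U' hU'open
  · rintro p ⟨x, _, rfl⟩
    exact x.prop
  · intro p hp
    refine ⟨⟨p, hfpos p hp⟩, ⟨⟨p, hfpos p hp⟩, hp, ?_⟩, rfl⟩
    rw [hd0]
    exact hεpos
  · -- the main disjointness statement
    have main : ∀ (m m' : ℤ) (γ γ' : H ≃ᵢ H), γ ∈ T.Γ → γ' ∈ T.Γ → m' ≤ m →
        tileAct T m γ '' fundTile T ≠ tileAct T m' γ' '' fundTile T →
        col (tileAct T m γ '' fundTile T) = col (tileAct T m' γ' '' fundTile T) →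
        (tileAct T m γ '' U) ∩ (tileAct T m' γ' '' U) = ∅ := by
      intro m m' γ γ' hγ hγ' hmle hneq hcoleq
      rw [Set.eq_empty_iff_forall_notMem]
      rintro p ⟨⟨u, huU, hpu⟩, ⟨u', hu'U, hpu'⟩⟩
      obtain ⟨u1, hu1U', rfl⟩ := huU
      obtain ⟨v1, hv1U', rfl⟩ := hu'U
      obtain ⟨q, hq, hqd⟩ := hu1U'
      obtain ⟨q', hq', hq'd⟩ := hv1U'
      -- the two actions agree at u1, v1
      have hpp : tileActS T m γ u1 = tileActS T m' γ' v1 := by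
        apply Subtype.ext
        show tileAct T m γ u1.val = tileAct T m' γ' v1.val
        rw [hpu, hpu']
      -- distance estimate between the two translated base points
      have h3 : d (tileActS T m γ q) (tileActS T m' γ' q') < 2 * ε := by
        have t1 : d (tileActS T m γ q) (tileActS T m γ u1) < ε := by
          rw [hinv m γ hγ]; exact hqd
        have t2 : d (tileActS T m' γ' v1) (tileActS T m' γ' q') < ε := by
          rw [hinv m' γ' hγ', hdsymm]; exact hq'd
        calc d (tileActS T m γ q) (tileActS T m' γ' q')
            ≤ d (tileActS T m γ q) (tileActS T m γ u1)
              + d (tileActS T m γ u1) (tileActS T m' γ' q') := hdtri _ _ _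
          _ = d (tileActS T m γ q) (tileActS T m γ u1)
              + d (tileActS T m' γ' v1) (tileActS T m' γ' q') := by rw [hpp]
          _ < ε + ε := add_lt_add t1 t2
          _ = 2 * ε := by ring
      set k : ℤ := -m + m' with hkdef
      have hk : k ≤ 0 := by omega
      -- translate back to the fundamental tile
      have e1 : tileActS T (-m) 1 (tileActS T m γ q) = tileActS T 0 γ q := by
        rw [stmt12_comp_one, neg_add_cancel]
      have e2 : tileActS T (-m) 1 (tileActS T m' γ' q') = tileActS T k γ' q' :=
        stmt12_comp_one T (-m) m' γ' q'
      have h4 : d (tileActS T 0 γ q) (tileActS T k γ' q') < 2 * ε := by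
        rw [← e1, ← e2, hinv (-m) 1 T.Γ.one_mem]
        exact h3
      obtain ⟨c, hc, hcomm⟩ := stmt12_conj_zpow T hk (T.Γ.inv_mem hγ)
      have e3 : tileActS T 0 γ⁻¹ (tileActS T 0 γ q) = q := by
        apply Subtype.ext
        show tileAct T 0 γ⁻¹ (tileAct T 0 γ q.val) = q.val
        unfold tileAct
        simp [zpow_zero, Equiv.Perm.one_apply]
      have e4 : tileActS T 0 γ⁻¹ (tileActS T k γ' q') = tileActS T k (c * γ') q' := by
        apply Subtype.ext
        show tileAct T 0 γ⁻¹ (tileAct T k γ' q'.val) = tileAct T k (c * γ') q'.val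
        unfold tileAct
        simp only [zpow_zero, Equiv.Perm.coe_one, id_eq, one_mul]
        rw [hcomm, IsometryEquiv.mul_apply]
      have h5 : d q (tileActS T k (c * γ') q') < 2 * ε := by
        rw [← e3, ← e4, hinv 0 γ⁻¹ (T.Γ.inv_mem hγ)]
        exact h4
      -- the translated tile is a tile disjoint from the fundamental tile
      have hgh : (tileAct T m γ '' fundTile T) ∩ (tileAct T m' γ' '' fundTile T) = ∅ :=
        hcol _ _ ⟨m, γ, hγ, rfl⟩ ⟨m', γ', hγ', rfl⟩ hneq hcoleq
      have hmk : m + k = m' := by omega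
      have key : ∀ w : H × ℝ, tileAct T m γ (tileAct T k (c * γ') w) = tileAct T m' γ' w := by
        intro w
        unfold tileAct
        simp only [Prod.mk.injEq]
        constructor
        · have hc1 : (T.alpha ^ k) ((c * γ') w.1) = γ⁻¹ ((T.alpha ^ k) (γ' w.1)) := by
            rw [IsometryEquiv.mul_apply, ← hcomm]
          rw [hc1, IsometryEquiv.apply_inv_self, ← Equiv.Perm.mul_apply, ← zpow_add, hmk]
        · rw [← mul_assoc, ← zpow_add₀ (ne_of_gt ha0), hmk]
      have hdisjQ : (tileAct T k (c * γ') '' fundTile T) ∩ fundTile T = ∅ := by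
        rw [Set.eq_empty_iff_forall_notMem]
        rintro z ⟨⟨w, hw, rfl⟩, hz0⟩
        have m1 : tileAct T m γ (tileAct T k (c * γ') w)
            ∈ tileAct T m γ '' fundTile T := ⟨tileAct T k (c * γ') w, hz0, rfl⟩
        have m2 : tileAct T m γ (tileAct T k (c * γ') w)
            ∈ tileAct T m' γ' '' fundTile T := by
          rw [key w]
          exact ⟨w, hw, rfl⟩
        exact Set.eq_empty_iff_forall_notMem.mp hgh _ ⟨m1, m2⟩
      have hyQ : (tileActS T k (c * γ') q').val ∈ tileAct T k (c * γ') '' fundTile T :=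
        ⟨q'.val, hq', rfl⟩
      have := keyClaim _ ⟨k, c * γ', T.Γ.mul_mem hc hγ', rfl⟩ hdisjQ q hq _ hyQ
      linarith
    intro m m' γ γ' hγ hγ' hneq hcoleq
    rcases le_total m' m with h | h
    · exact main m m' γ γ' hγ hγ' h hneq hcoleq
    · rw [Set.inter_comm]
      exact main m' m γ' γ hγ' hγ h (Ne.symm hneq) hcoleq.symm
end

section
/- Let C ≥ 0 and let (X,d) be a C-roughly geodesic metric space. Let 𝒬 be a cover of X by nonempty subsets, set D = 3·sup_{Q∈𝒬} diam(Q), and assume C < D < ∞. Form the graph with vertex set 𝒬 and an edge between distinct Q, Q′ whenever Q ∩ Q′ ≠ ∅, with graph metric d_𝒬 (each edge of length 1). Assume there is N ∈ ℕ such that whenever d(x,y) < D, any member of 𝒬 containing x and any member containing y are at graph distance at most N. Let f : X → 𝒬 be any map with x ∈ f(x) for all x. Then for all x, y ∈ X: d(x,y) ≤ (2D/3)·d_𝒬(f(x),f(y)) whenever f(x) ≠ f(y), and d_𝒬(f(x),f(y)) ≤ N·(d(x,y)/(D−C) + 1). In particular f is a surjective quasi-isometry from (X,d) onto the graph (𝒬,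 d_𝒬). -/
/-- The intersection graph of a cover `𝒬`: vertices are members of `𝒬`, and two distinct
members are adjacent iff they intersect. -/
def coverGraph {X : Type*} (𝒬 : Set (Set X)) : SimpleGraph {Q // Q ∈ 𝒬} where
  Adj Q Q' := Q ≠ Q' ∧ (Q.val ∩ Q'.val).Nonempty
  symm := ⟨fun Q Q' h => ⟨h.1.symm, Set.inter_comm Q'.val Q.val ▸ h.2⟩⟩
  loopless := ⟨fun Q h => h.1 rfl⟩

/-! A map from a `C`-roughly geodesic space to a graph that moves points at distance `< D`
by at most `N` is coarsely Lipschitz: cut a rough geodesic from `x` to `y` into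
`n = ⌊d(x,y)/(D-C)⌋ + 1` pieces of parameter length `< D - C`, so consecutive points are
at distance `< D` and the graph distance grows by at most `N` per piece. Conversely, a walk
of length `k` in the intersection graph of a cover by sets of diameter `≤ δ` joins points at
distance `≤ δ (k + 1) ≤ 2 δ k`. -/

lemma SimpleGraph.edist_le_of_chain {V : Type*} (G : SimpleGraph V) (g : ℕ → V) {N : ℕ∞} :
    ∀ n : ℕ, (∀ i < n, G.edist (g i) (g (i + 1)) ≤ N) → G.edist (g 0) (g n) ≤ n * N
  | 0, _ => by simp
  | n + 1, h => calc
      G.edist (g 0) (g (n + 1)) ≤ G.edist (g 0) (g n) + G.edist (g n) (g (n + 1)) :=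
        G.edist_triangle
      _ ≤ n * N + N :=
        add_le_add (edist_le_of_chain G g n fun i hi => h i (by omega)) (h n n.lt_succ_self)
      _ = (n + 1 : ℕ) * N := by push_cast; ring

lemma div_floor_div_add_one_lt {a b : ℝ} (hb : 0 < b) : a / (⌊a / b⌋₊ + 1 : ℕ) < b := by
  rw [div_lt_iff₀ (by positivity), ← div_lt_iff₀' hb]
  push_cast
  exact Nat.lt_floor_add_one _

lemma IsRoughGeodBetween.dist_subdivision_le {X : Type*} [MetricSpace X] {C : ℝ} {ξ : ℝ → X}
    {x y : X} (hξ : IsRoughGeodBetween C ξ x y) {n i : ℕ} (hi : i < n) :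
    dist (ξ (i * dist x y / n)) (ξ ((i + 1 : ℕ) * dist x y / n)) ≤ dist x y / n + C := by
  have hn : (0 : ℝ) < n := by exact_mod_cast (Nat.zero_le i).trans_lt hi
  have hmem : ∀ j ≤ n, (j : ℝ) * dist x y / n ∈ Set.Icc 0 (dist x y) := fun j hj => by
    refine ⟨by positivity, div_le_of_le_mul₀ hn.le dist_nonneg ?_⟩
    rw [mul_comm (dist x y)]
    exact mul_le_mul_of_nonneg_right (by exact_mod_cast hj) dist_nonneg
  have habs : |(i : ℝ) * dist x y / n - (i + 1 : ℕ) * dist x y / n| = dist x y / n := by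
    rw [abs_sub_comm, Nat.cast_succ, add_mul, add_div, add_sub_cancel_left, one_mul,
      abs_of_nonneg (by positivity)]
  simpa only [habs] using (hξ.2.2 _ (hmem i hi.le) _ (hmem (i + 1) hi)).2

lemma IsRoughGeodBetween.edist_le {X V : Type*} [MetricSpace X] {G : SimpleGraph V}
    {C D : ℝ} {N : ℕ} (hCD : C < D) {f : X → V}
    (hf : ∀ x y, dist x y < D → G.edist (f x) (f y) ≤ N) {ξ : ℝ → X} {x y : X}
    (hξ : IsRoughGeodBetween C ξ x y) :
    G.edist (f x) (f y) ≤ (⌊dist x y / (D - C)⌋₊ + 1 : ℕ) * N := by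
  set n := ⌊dist x y / (D - C)⌋₊ + 1
  have hn : (n : ℝ) ≠ 0 := by positivity
  have hpiece : dist x y / n < D - C := div_floor_div_add_one_lt (sub_pos.2 hCD)
  have hchain := G.edist_le_of_chain (fun i : ℕ => f (ξ (i * dist x y / n))) n fun i hi =>
    hf _ _ ((hξ.dist_subdivision_le hi).trans_lt (by linarith))
  simpa only [Nat.cast_zero, zero_mul, zero_div, hξ.1, mul_div_cancel_left₀ _ hn, hξ.2.1]
    using hchain

lemma coverGraph.dist_le_mul_length_add_one {X : Type*} [MetricSpace X] {𝒬 : Set (Set X)}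
    {δ : ℝ} (hδ : ∀ Q ∈ 𝒬, ∀ a ∈ Q, ∀ b ∈ Q, dist a b ≤ δ) {Q Q' : {Q // Q ∈ 𝒬}}
    (p : (coverGraph 𝒬).Walk Q Q') {x y : X} (hx : x ∈ Q.val) (hy : y ∈ Q'.val) :
    dist x y ≤ δ * (p.length + 1) := by
  induction p generalizing x with
  | @nil Q => simpa using hδ _ Q.2 x hx y hy
  | @cons Q Q₁ _ hadj p ih =>
    obtain ⟨z, hzQ, hzQ₁⟩ := hadj.2
    calc dist x y ≤ dist x z + dist z y := dist_triangle x z y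
      _ ≤ δ + δ * (p.length + 1) := add_le_add (hδ _ Q.2 x hx z hzQ) (ih hzQ₁ hy)
      _ = δ * ((p.cons hadj).length + 1) := by
        rw [SimpleGraph.Walk.length_cons]; push_cast; ring

lemma coverGraph.dist_le_two_mul_dist {X : Type*} [MetricSpace X] {𝒬 : Set (Set X)}
    {δ : ℝ} (hδ : ∀ Q ∈ 𝒬, ∀ a ∈ Q, ∀ b ∈ Q, dist a b ≤ δ) {Q Q' : {Q // Q ∈ 𝒬}}
    (hr : (coverGraph 𝒬).Reachable Q Q') (hne : Q ≠ Q') {x y : X} (hx : x ∈ Q.val)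
    (hy : y ∈ Q'.val) :
    dist x y ≤ 2 * δ * (coverGraph 𝒬).dist Q Q' := by
  obtain ⟨p, hp⟩ := hr.exists_walk_length_eq_dist
  have hδ0 : 0 ≤ δ := dist_self x ▸ hδ _ Q.2 x hx x hx
  have hpos : (1 : ℝ) ≤ (coverGraph 𝒬).dist Q Q' := by exact_mod_cast hr.pos_dist_of_ne hne
  have := dist_le_mul_length_add_one hδ p hx hy
  rw [hp] at this
  nlinarith

theorem stmt_13_general {X : Type*} [MetricSpace X] (C : ℝ)
    (hgeod : ∀ x y : X, ∃ ξ : ℝ → X, IsRoughGeodBetween C ξ x y)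
    (𝒬 : Set (Set X))
    (hbdd : ∀ Q ∈ 𝒬, Bornology.IsBounded Q) (hbdd2 : BddAbove (Metric.diam '' 𝒬))
    (D : ℝ) (hD : D = 3 * sSup (Metric.diam '' 𝒬)) (hCD : C < D)
    (N : ℕ)
    (hN : ∀ x y : X, dist x y < D → ∀ Q Q' : {Q // Q ∈ 𝒬}, x ∈ Q.val → y ∈ Q'.val →
      (coverGraph 𝒬).Reachable Q Q' ∧ (coverGraph 𝒬).dist Q Q' ≤ N)
    (f : X → {Q // Q ∈ 𝒬}) (hf : ∀ x : X, x ∈ (f x).val) :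
    ∀ x y : X,
      (f x ≠ f y → dist x y ≤ (2 * D / 3) * ((coverGraph 𝒬).dist (f x) (f y) : ℝ)) ∧
      ((coverGraph 𝒬).dist (f x) (f y) : ℝ) ≤ N * (dist x y / (D - C) + 1) := by
  intro x y
  have hdiam : ∀ Q ∈ 𝒬, ∀ a ∈ Q, ∀ b ∈ Q, dist a b ≤ D / 3 := fun Q hQ a ha b hb => by
    linarith [Metric.dist_le_diam_of_mem (hbdd Q hQ) ha hb, le_csSup hbdd2 ⟨Q, hQ, rfl⟩]
  have hstep : ∀ x y, dist x y < D → (coverGraph 𝒬).edist (f x) (f y) ≤ N := fun x y h => by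
    obtain ⟨hr, hd⟩ := hN x y h _ _ (hf x) (hf y)
    rw [← hr.coe_dist_eq_edist]
    exact_mod_cast hd
  obtain ⟨ξ, hξ⟩ := hgeod x y
  have hle := hξ.edist_le hCD hstep
  have hr : (coverGraph 𝒬).Reachable (f x) (f y) :=
    SimpleGraph.reachable_of_edist_ne_top (ne_top_of_le_ne_top (by exact_mod_cast ENat.natCast_ne_top _) hle)
  rw [← hr.coe_dist_eq_edist] at hle
  have hdist : ((coverGraph 𝒬).dist (f x) (f y) : ℝ) ≤ (⌊dist x y / (D - C)⌋₊ + 1 : ℕ) * N := by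
    exact_mod_cast hle
  refine ⟨fun hne => ?_, ?_⟩
  · have := coverGraph.dist_le_two_mul_dist hdiam hr hne (hf x) (hf y)
    linarith
  · rw [mul_comm]
    refine hdist.trans (mul_le_mul_of_nonneg_right ?_ N.cast_nonneg)
    push_cast
    gcongr
    exact Nat.floor_le (div_nonneg dist_nonneg (sub_pos.2 hCD).le)

/-- Milnor–Švarc-type lemma. Let `(X,d)` be a `C`-roughly geodesic space, `𝒬` a cover of
`X` by nonempty subsets, `D = 3·sup_{Q∈𝒬} diam Q` with `C < D < ∞`, and suppose any two
members of `𝒬` containing points at distance `< D` are at graph distance `≤ N` in the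
intersection graph. If `f : X → 𝒬` satisfies `x ∈ f(x)`, then `f` is a quasi-isometry:
`d(x,y) ≤ (2D/3)·d_𝒬(f x, f y)` whenever `f x ≠ f y`, and
`d_𝒬(f x, f y) ≤ N·(d(x,y)/(D−C) + 1)`. -/
theorem stmt_13 {X : Type*} [MetricSpace X] (C : ℝ) (hC : 0 ≤ C)
    (hgeod : ∀ x y : X, ∃ ξ : ℝ → X, IsRoughGeodBetween C ξ x y)
    (𝒬 : Set (Set X)) (hne : ∀ Q ∈ 𝒬, Q.Nonempty) (hQcover : ⋃₀ 𝒬 = Set.univ)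
    (hbdd : ∀ Q ∈ 𝒬, Bornology.IsBounded Q) (hbdd2 : BddAbove (Metric.diam '' 𝒬))
    (D : ℝ) (hD : D = 3 * sSup (Metric.diam '' 𝒬)) (hCD : C < D)
    (N : ℕ)
    (hN : ∀ x y : X, dist x y < D → ∀ Q Q' : {Q // Q ∈ 𝒬}, x ∈ Q.val → y ∈ Q'.val →
      (coverGraph 𝒬).Reachable Q Q' ∧ (coverGraph 𝒬).dist Q Q' ≤ N)
    (f : X → {Q // Q ∈ 𝒬}) (hf : ∀ x : X, x ∈ (f x).val) :
    ∀ x y : X,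
      (f x ≠ f y → dist x y ≤ (2 * D / 3) * ((coverGraph 𝒬).dist (f x) (f y) : ℝ)) ∧
      ((coverGraph 𝒬).dist (f x) (f y) : ℝ) ≤ N * (dist x y / (D - C) + 1) :=
  stmt_13_general C hgeod 𝒬 hbdd hbdd2 D hD hCD N hN f hf
end

section
/- Let (H,d) be a proper metric space homeomorphic to ℝⁿ, η an increasing homeomorphism of [0,∞), x₀ ≠ y₀ two points of H, K ⊆ H compact, and a > 1. Let F_η be the set of all η-quasi-symmetric surjections f : H → H satisfying f(x₀) ∈ K and d(x₀,y₀) ≤ d(f(x₀), f(y₀)) ≤ a·d(x₀,y₀). Then F_η is a compact subset of the space C(H,H) of continuous self-maps of H with the compact-open topology. -/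
/-- `η` is an increasing homeomorphism of `[0,∞)` onto itself. -/
def IncrHomeoNonneg (η : ℝ → ℝ) : Prop :=
  η 0 = 0 ∧ StrictMonoOn η (Set.Ici 0) ∧ η '' Set.Ici 0 = Set.Ici 0

/-- `f` is an `η`-quasi-symmetry. -/
def IsQS {X Y : Type*} [MetricSpace X] [MetricSpace Y] (η : ℝ → ℝ) (f : X → Y) : Prop :=
  Function.Surjective f ∧ ∀ x y z : X, x ≠ z →
    dist (f x) (f y) ≤ η (dist x y / dist x z) * dist (f x) (f z)

/-- For an increasing homeomorphism of `[0,∞)`, values near `0` are small. -/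
lemma incrHomeoNonneg_small {η : ℝ → ℝ} (hη : IncrHomeoNonneg η) {ε : ℝ} (hε : 0 < ε) :
    ∃ s > 0, ∀ t, 0 ≤ t → t ≤ s → η t ≤ ε := by
  obtain ⟨h0, hmono, himg⟩ := hη
  have hε' : ε ∈ η '' Set.Ici 0 := by rw [himg]; exact le_of_lt hε
  obtain ⟨s, hs, hsε⟩ := hε'
  have hs0 : s ≠ 0 := by
    rintro rfl; rw [h0] at hsε; exact absurd hsε.symm (ne_of_gt hε)
  refine ⟨s, lt_of_le_of_ne hs (Ne.symm hs0), fun t ht hts => ?_⟩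
  calc η t ≤ η s := hmono.monotoneOn ht hs hts
  _ = ε := hsε

/-- `η` is nonnegative on `[0,∞)`. -/
lemma incrHomeoNonneg_nonneg {η : ℝ → ℝ} (hη : IncrHomeoNonneg η) {t : ℝ} (ht : 0 ≤ t) :
    0 ≤ η t := by
  have := hη.2.1.monotoneOn (Set.self_mem_Ici) ht ht
  rwa [hη.1] at this

/-- Let `(H,d)` be a proper metric space homeomorphic to `ℝⁿ`, `η` an increasing
homeomorphism of `[0,∞)`, `x₀ ≠ y₀` in `H`, `K ⊆ H` compact, and `a > 1`. The family
`F_η` of η-quasi-symmetric surjections `f : H → H` with `f(x₀) ∈ K` and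
`d(x₀,y₀) ≤ d(f x₀, f y₀) ≤ a·d(x₀,y₀)` is compact in `C(H,H)` with the compact-open
topology. -/
theorem stmt_15 {H : Type*} [MetricSpace H] [ProperSpace H]
    (n : ℕ) (e : H ≃ₜ EuclideanSpace ℝ (Fin n))
    (η : ℝ → ℝ) (hη : IncrHomeoNonneg η)
    (x₀ y₀ : H) (hxy : x₀ ≠ y₀)
    (K : Set H) (hK : IsCompact K)
    (a : ℝ) (ha : 1 < a) :
    IsCompact {f : ContinuousMap H H |
      IsQS η ⇑f ∧ f x₀ ∈ K ∧
      dist x₀ y₀ ≤ dist (f x₀) (f y₀) ∧ dist (f x₀) (f y₀) ≤ a * dist x₀ y₀} := by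
  classical
  set S : Set (ContinuousMap H H) := {f : ContinuousMap H H |
      IsQS η ⇑f ∧ f x₀ ∈ K ∧
      dist x₀ y₀ ≤ dist (f x₀) (f y₀) ∧ dist (f x₀) (f y₀) ≤ a * dist x₀ y₀} with hSdef
  set d₀ : ℝ := dist x₀ y₀ with hd₀def
  have hd₀ : 0 < d₀ := dist_pos.mpr hxy
  have ha0 : (0:ℝ) < a := lt_trans one_pos ha
  obtain ⟨RK, hRK⟩ := hK.isBounded.subset_closedBall x₀
  have hRK0 : 0 ≤ RK ∨ K = ∅ := by
    by_cases h : K = ∅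
    · exact Or.inr h
    · obtain ⟨k, hk⟩ := Set.nonempty_iff_ne_empty.mpr h
      exact Or.inl (le_trans dist_nonneg (hRK hk))
  -- Basic growth bound.
  have L1 : ∀ g ∈ S, ∀ x : H, dist (g x₀) (g x) ≤ η (dist x₀ x / d₀) * (a * d₀) := by
    intro g hg x
    have hQS := hg.1.2 x₀ x y₀ hxy
    have hupp := hg.2.2.2
    calc dist (g x₀) (g x) ≤ η (dist x₀ x / dist x₀ y₀) * dist (g x₀) (g y₀) := hQS
    _ ≤ η (dist x₀ x / d₀) * (a * d₀) := by
        apply mul_le_mul_of_nonneg_left hupp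
        exact incrHomeoNonneg_nonneg hη (div_nonneg dist_nonneg hd₀.le)
  -- Lower growth bound.
  have L2 : ∀ g ∈ S, ∀ x : H, x₀ ≠ x → d₀ ≤ η (d₀ / dist x₀ x) * dist (g x₀) (g x) := by
    intro g hg x hx
    have hQS := hg.1.2 x₀ y₀ x hx
    exact le_trans hg.2.2.1 hQS
  -- equicontinuity key estimate
  have Ekey : ∀ x : H, ∀ ε : ℝ, 0 < ε → ∃ δ > 0, ∀ g ∈ S, ∀ x' : H,
      dist x x' < δ → dist (g x) (g x') ≤ ε := by
    intro x ε hε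
    -- choose a reference point w far from x
    obtain ⟨w, hw1, hw2⟩ : ∃ w, (w = x₀ ∨ w = y₀) ∧ d₀ / 2 ≤ dist x w := by
      by_cases h : d₀ / 2 ≤ dist x x₀
      · exact ⟨x₀, Or.inl rfl, h⟩
      · refine ⟨y₀, Or.inr rfl, ?_⟩
        push_neg at h
        have := dist_triangle x₀ x y₀
        rw [dist_comm x₀ x] at this
        linarith
    have hxw : x ≠ w := by
      intro hxw; rw [hxw, dist_self] at hw2; linarith
    have hdxw : 0 < dist x w := lt_of_lt_of_le (by linarith) hw2
    -- uniform bound on dist (g x) (g w)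
    set M : ℝ := (η (dist x₀ x / d₀) + η 1) * (a * d₀) with hMdef
    have hMb : ∀ g ∈ S, dist (g x) (g w) ≤ M := by
      intro g hg
      have h1 := L1 g hg x
      have h2 : dist (g x₀) (g w) ≤ η 1 * (a * d₀) := by
        rcases hw1 with h | h
        · rw [h, dist_self]
          have : 0 ≤ η 1 := incrHomeoNonneg_nonneg hη zero_le_one
          positivity
        · have h2 := L1 g hg y₀
          rw [← hd₀def, div_self hd₀.ne'] at h2
          rwa [h]
      calc dist (g x) (g w) ≤ dist (g x₀) (g x) + dist (g x₀) (g w) :=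
            dist_triangle_left _ _ _
      _ ≤ η (dist x₀ x / d₀) * (a * d₀) + η 1 * (a * d₀) := add_le_add h1 h2
      _ = M := by ring
    have hM0 : 0 ≤ M := by
      have h1 : 0 ≤ η (dist x₀ x / d₀) :=
        incrHomeoNonneg_nonneg hη (div_nonneg dist_nonneg hd₀.le)
      have h2 : 0 ≤ η 1 := incrHomeoNonneg_nonneg hη zero_le_one
      positivity
    obtain ⟨s, hs, hsmall⟩ := incrHomeoNonneg_small hη (show (0:ℝ) < ε / (M + 1) by positivity)
    refine ⟨s * (d₀ / 2), by positivity, fun g hg x' hx' => ?_⟩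
    have hratio : dist x x' / dist x w ≤ s := by
      rw [div_le_iff₀ hdxw]
      calc dist x x' ≤ s * (d₀ / 2) := hx'.le
      _ ≤ s * dist x w := by nlinarith
    have hQS := hg.1.2 x x' w hxw
    calc dist (g x) (g x') ≤ η (dist x x' / dist x w) * dist (g x) (g w) := hQS
    _ ≤ (ε / (M + 1)) * M := by
        apply mul_le_mul (hsmall _ (div_nonneg dist_nonneg hdxw.le) hratio) (hMb g hg)
          dist_nonneg (by positivity)
    _ ≤ ε := by
        rw [div_mul_eq_mul_div, div_le_iff₀ (by positivity)]
        nlinarith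
  -- nonemptiness-independent: if S empty, done
  rcases Set.eq_empty_or_nonempty S with hSe | hSne
  · rw [hSe]; exact isCompact_empty
  have hRK0' : 0 ≤ RK := by
    rcases hRK0 with h | h
    · exact h
    · exfalso
      obtain ⟨g, hg⟩ := hSne
      have := hg.2.1
      rw [h] at this
      exact this
  -- the image in the product space
  set T : Set (H → H) := ContinuousMap.toFun '' S with hTdef
  have hTmem : ∀ g₀ ∈ T, ∃ g ∈ S, ⇑g = g₀ := by
    intro g₀ hg₀; obtain ⟨g, hg, hgeq⟩ := hg₀; exact ⟨g, hg, hgeq⟩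
  -- pointwise compact bound
  have hTsub : T ⊆ Set.pi Set.univ
      (fun x => Metric.closedBall x₀ (RK + η (dist x₀ x / d₀) * (a * d₀))) := by
    rintro g₀ ⟨g, hg, rfl⟩ x _
    have h1 : dist (g x₀) x₀ ≤ RK := Metric.mem_closedBall.mp (hRK hg.2.1)
    have h2 := L1 g hg x
    rw [Metric.mem_closedBall]
    calc dist (g x) x₀ ≤ dist (g x) (g x₀) + dist (g x₀) x₀ := dist_triangle _ _ _
    _ ≤ η (dist x₀ x / d₀) * (a * d₀) + RK := by
        rw [dist_comm (g x) (g x₀)]; exact add_le_add h2 h1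
    _ = RK + η (dist x₀ x / d₀) * (a * d₀) := by ring
  -- T is closed in the product topology
  have hTclosed : IsClosed T := by
    rw [← closure_subset_iff_isClosed]
    intro f hf
    obtain ⟨G, hGT, hGf⟩ := mem_closure_iff_ultrafilter.mp hf
    have ptwise : ∀ x : H, Filter.Tendsto (fun g : H → H => g x) G (nhds (f x)) :=
      fun x => ((continuous_apply x).tendsto f).comp hGf
    -- f is continuous
    have fcont : Continuous f := by
      rw [Metric.continuous_iff]
      intro x ε hε
      obtain ⟨δ, hδ, hEk⟩ := Ekey x (ε / 2) (by positivity)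
      refine ⟨δ, hδ, fun x' hx' => ?_⟩
      have key : dist (f x) (f x') ≤ ε / 2 := by
        have t1 : Filter.Tendsto (fun g : H → H => dist (g x) (g x')) G
            (nhds (dist (f x) (f x'))) := ((ptwise x).dist (ptwise x'))
        refine le_of_tendsto t1 ?_
        filter_upwards [hGT] with g hg
        obtain ⟨g', hg', rfl⟩ := hTmem g hg
        exact hEk g' hg' x' (by rwa [dist_comm] at hx')
      rw [dist_comm]
      linarith
    -- limit inequalities
    have hQSf : ∀ x y z : H, x ≠ z →
        dist (f x) (f y) ≤ η (dist x y / dist x z) * dist (f x) (f z) := by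
      intro x y z hxz
      have t1 : Filter.Tendsto (fun g : H → H => dist (g x) (g y)) G
          (nhds (dist (f x) (f y))) := (ptwise x).dist (ptwise y)
      have t2 : Filter.Tendsto (fun g : H → H => η (dist x y / dist x z) * dist (g x) (g z)) G
          (nhds (η (dist x y / dist x z) * dist (f x) (f z))) :=
        ((ptwise x).dist (ptwise z)).const_mul _
      have hev : ∀ᶠ g : H → H in G,
          dist (g x) (g y) ≤ η (dist x y / dist x z) * dist (g x) (g z) := by
        filter_upwards [hGT] with g hg
        obtain ⟨g', hg', rfl⟩ := hTmem g hg
        exact hg'.1.2 x y z hxz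
      exact le_of_tendsto_of_tendsto t1 t2 hev
    -- f x₀ ∈ K
    have hfK : f x₀ ∈ K := by
      refine hK.isClosed.mem_of_tendsto (ptwise x₀) ?_
      filter_upwards [hGT] with g hg
      obtain ⟨g', hg', rfl⟩ := hTmem g hg
      exact hg'.2.1
    -- lower distance bound
    have hflow : d₀ ≤ dist (f x₀) (f y₀) := by
      refine ge_of_tendsto ((ptwise x₀).dist (ptwise y₀)) ?_
      filter_upwards [hGT] with g hg
      obtain ⟨g', hg', rfl⟩ := hTmem g hg
      exact hg'.2.2.1
    -- upper distance bound
    have hfupp : dist (f x₀) (f y₀) ≤ a * d₀ := by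
      refine le_of_tendsto ((ptwise x₀).dist (ptwise y₀)) ?_
      filter_upwards [hGT] with g hg
      obtain ⟨g', hg', rfl⟩ := hTmem g hg
      exact hg'.2.2.2
    -- surjectivity of f
    have hfsurj : Function.Surjective f := by
      intro y
      -- all S-preimages of y lie in a fixed closed ball
      set C : ℝ := RK + dist x₀ y + 1 with hCdef
      have hC : 0 < C := by have := dist_nonneg (x := x₀) (y := y); positivity
      obtain ⟨s, hs, hsmall⟩ := incrHomeoNonneg_small hη (show (0:ℝ) < d₀ / C by positivity)
      set R : ℝ := d₀ / s with hRdef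
      have hR : 0 < R := by positivity
      have hpre : ∀ g ∈ S, ∀ x : H, g x = y → x ∈ Metric.closedBall x₀ R := by
        intro g hg x hgx
        by_contra hxB
        rw [Metric.mem_closedBall, not_le] at hxB
        have hxx₀ : x₀ ≠ x := by
          intro h; rw [← h, dist_self] at hxB; linarith
        have hdx : 0 < dist x₀ x := by rw [dist_comm x x₀] at hxB; linarith
        have hη1 : η (d₀ / dist x₀ x) ≤ d₀ / C := by
          apply hsmall _ (by positivity)
          rw [div_le_iff₀ hdx, hRdef] at *
          rw [div_lt_iff₀ hs] at hxB
          rw [dist_comm x x₀] at hxB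
          nlinarith
        have h2 := L2 g hg x hxx₀
        have hdist : dist (g x₀) (g x) ≤ C - 1 := by
          have h1 : dist (g x₀) x₀ ≤ RK := Metric.mem_closedBall.mp (hRK hg.2.1)
          calc dist (g x₀) (g x) ≤ dist (g x₀) x₀ + dist x₀ (g x) := dist_triangle _ _ _
          _ = dist (g x₀) x₀ + dist x₀ y := by rw [hgx]
          _ ≤ RK + dist x₀ y := by linarith
          _ = C - 1 := by rw [hCdef]; ring
        have hdn : 0 ≤ dist (g x₀) (g x) := dist_nonneg
        have : d₀ ≤ (d₀ / C) * (C - 1) := by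
          calc d₀ ≤ η (d₀ / dist x₀ x) * dist (g x₀) (g x) := h2
          _ ≤ (d₀ / C) * (C - 1) := by
              apply mul_le_mul hη1 hdist hdn (by positivity)
        rw [div_mul_eq_mul_div, le_div_iff₀ hC] at this
        nlinarith
      -- pick a preimage for each g
      set φ : (H → H) → H := fun g =>
        if h : ∃ x, x ∈ Metric.closedBall x₀ R ∧ g x = y then h.choose else x₀ with hφdef
      have hφspec : ∀ g ∈ T, φ g ∈ Metric.closedBall x₀ R ∧ g (φ g) = y := by
        intro g hg
        obtain ⟨g', hg', rfl⟩ := hTmem g hg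
        obtain ⟨x, hx⟩ := hg'.1.1 y
        have hex : ∃ x, x ∈ Metric.closedBall x₀ R ∧ (⇑g' : H → H) x = y :=
          ⟨x, hpre g' hg' x hx, hx⟩
        rw [hφdef]
        simp only [dif_pos hex]
        exact hex.choose_spec
      have hBmem : Metric.closedBall x₀ R ∈ Filter.map φ G := by
        rw [Filter.mem_map]
        exact Filter.mem_of_superset hGT (fun g hg => (hφspec g hg).1)
      obtain ⟨x, hxB, hxlim⟩ := (isCompact_closedBall x₀ R).ultrafilter_le_nhds
        (G.map φ) (Filter.le_principal_iff.mpr hBmem)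
      refine ⟨x, ?_⟩
      have key : ∀ ε : ℝ, 0 < ε → dist (f x) y ≤ ε := by
        intro ε hε
        obtain ⟨δ, hδ, hEk⟩ := Ekey x (ε / 2) (by positivity)
        have E1 : {g : H → H | dist x (φ g) < δ} ∈ G := by
          have : Metric.ball x δ ∈ nhds x := Metric.ball_mem_nhds x hδ
          have := hxlim this
          rw [Ultrafilter.coe_map, Filter.mem_map] at this
          refine Filter.mem_of_superset this (fun g hg => ?_)
          simpa [Metric.mem_ball, dist_comm] using hg
        have E2 : {g : H → H | dist (g x) (f x) < ε / 2} ∈ G := by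
          have : Metric.ball (f x) (ε / 2) ∈ nhds (f x) := Metric.ball_mem_nhds _ (by positivity)
          have := (ptwise x) this
          refine Filter.mem_of_superset this (fun g hg => ?_)
          simpa [Metric.mem_ball] using hg
        have hall : ({g : H → H | dist x (φ g) < δ} ∩
            ({g : H → H | dist (g x) (f x) < ε / 2} ∩ T)).Nonempty :=
          Filter.nonempty_of_mem (Filter.inter_mem E1 (Filter.inter_mem E2 hGT))
        obtain ⟨g, hg1, hg2, hg3⟩ := hall
        obtain ⟨g', hg', hgeq⟩ := hTmem g hg3
        have hgy : g (φ g) = y := (hφspec g hg3).2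
        have hclose : dist (g x) (g (φ g)) ≤ ε / 2 := by
          have := hEk g' hg' (φ g) hg1
          rwa [hgeq] at this
        calc dist (f x) y ≤ dist (f x) (g x) + dist (g x) y := dist_triangle _ _ _
        _ = dist (f x) (g x) + dist (g x) (g (φ g)) := by rw [hgy]
        _ ≤ ε / 2 + ε / 2 := by
            rw [dist_comm (f x) (g x)]; exact add_le_add hg2.le hclose
        _ = ε := by ring
      have : dist (f x) y ≤ 0 := le_of_forall_pos_le_add (by
        intro ε hε; simpa using key ε hε)
      exact dist_le_zero.mp this
    -- assemble the continuous map
    exact ⟨⟨f, fcont⟩, ⟨⟨hfsurj, hQSf⟩, hfK, hflow, hfupp⟩, rfl⟩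
  -- T is compact (closed subset of a product of compact balls)
  have hS1 : IsCompact T := by
    refine IsCompact.of_isClosed_subset ?_ hTclosed hTsub
    exact isCompact_univ_pi (fun x => isCompact_closedBall _ _)
  -- equicontinuity of S
  have hS2 : Equicontinuous ((↑) : S → H → H) := by
    intro x
    rw [Metric.equicontinuousAt_iff]
    intro ε hε
    obtain ⟨δ, hδ, hEk⟩ := Ekey x (ε / 2) (by positivity)
    refine ⟨δ, hδ, fun x' hx' g => ?_⟩
    have := hEk g g.2 x' (by rwa [dist_comm] at hx')
    calc dist ((g : C(H,H)) x) ((g : C(H,H)) x') ≤ ε / 2 := this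
    _ < ε := by linarith
  exact ArzelaAscoli.isCompact_of_equicontinuous S hS1 hS2
end

section
/- Let X be a proper metric space homeomorphic to ℝᵐ, let r > 0, let Q₀ ⊆ X be compact, and let F be a compact family (in the compact-open topology) of homeomorphisms of X onto itself. Assume the normalization property: for every z ∈ X and every f ∈ F there exist isometries g₁, g₂ of X onto itself such that g₁(z) ∈ Q₀ and g₂ ∘ f ∘ g₁⁻¹ ∈ F. Then there exists ε > 0 with the following property: if h : X → X satisfies sup_{x∈X} d(h(x), f(x)) < ε for some f ∈ F, and h(z) ≠ h(w) whenever z ≠ w and d(z,w) < r, then h is injective. -/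
/-!
Let `g` be a homeomorphism uniformly close to a homeomorphism `f` on a large compact set `A`,
and let `D` be compact, preconnected, with nonempty interior. Then `g⁻¹ D` is preconnected,
misses `frontier A` and meets `interior A`, so it lies in `A`. Compactness of `F` makes this
uniform, and local connectedness of `X` lets finitely many such `D` cover any compact `K`, so
`⋃ f ∈ F, f⁻¹ K` is bounded. Hence `dist (f z) (f w)` is bounded below by some `δ > 0` for
`f ∈ F`, `z ∈ Q₀` and `r ≤ dist z w`; the normalizing isometries carry this bound to every `z`,
and a map `δ/2`-close to `f` cannot identify two points at distance at least `r`.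
-/

open Metric Set Filter Topology Bornology

theorem IsPreconnected.subset_interior_of_disjoint_frontier {X : Type*} [TopologicalSpace X]
    {E A : Set X} (hE : IsPreconnected E) (hmeet : (E ∩ interior A).Nonempty)
    (hfront : Disjoint E (frontier A)) : E ⊆ interior A := by
  refine hE.subset_of_closure_inter_subset isOpen_interior hmeet fun x ⟨hxA, hxE⟩ => ?_
  have : x ∈ interior A ∪ frontier A :=
    closure_eq_interior_union_frontier A ▸ closure_mono interior_subset hxA
  exact this.resolve_right (disjoint_left.1 hfront hxE)

theorem exists_mem_nhds_isCompact_isPreconnected {X : Type*} [TopologicalSpace X] [T2Space X]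
    [LocallyCompactSpace X] [LocallyConnectedSpace X] (x : X) :
    ∃ D ∈ 𝓝 x, IsCompact D ∧ IsPreconnected D := by
  obtain ⟨N, hN, hNx⟩ := exists_compact_mem_nhds x
  set C := connectedComponentIn (interior N) x
  have hC : C ⊆ N := (connectedComponentIn_subset _ x).trans interior_subset
  refine ⟨closure C, mem_of_superset ?_ subset_closure,
    hN.of_isClosed_subset isClosed_closure (closure_minimal hC hN.isClosed),
    isPreconnected_connectedComponentIn.closure⟩
  exact isOpen_interior.connectedComponentIn.mem_nhds
    (mem_connectedComponentIn (mem_interior_iff_mem_nhds.2 hNx))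

theorem ContinuousMap.eventually_forall_dist_lt {X Y : Type*} [TopologicalSpace X]
    [PseudoMetricSpace Y] (f : C(X, Y)) {K : Set X} (hK : IsCompact K) {ε : ℝ} (hε : 0 < ε) :
    ∀ᶠ g in 𝓝 f, ∀ x ∈ K, dist (f x) (g x) < ε :=
  Metric.tendstoUniformlyOn_iff.1
    (ContinuousMap.tendsto_iff_forall_isCompact_tendstoUniformlyOn.1 tendsto_id K hK) ε hε

section

variable {X : Type*} [MetricSpace X] [ProperSpace X]

theorem Homeomorph.exists_isCompact_eventually_preimage_subset (f : X ≃ₜ X) {D : Set X}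
    (hD : IsCompact D) (hDc : IsPreconnected D) (hDi : (interior D).Nonempty) :
    ∃ A, IsCompact A ∧ ∀ᶠ g : C(X, X) in 𝓝 (f : C(X, X)),
      (∃ G : X ≃ₜ X, ∀ x, G x = g x) → g ⁻¹' D ⊆ A := by
  obtain ⟨y, hy⟩ := hDi
  obtain ⟨s, hs, hsD⟩ := Metric.isOpen_iff.1 isOpen_interior y hy
  obtain ⟨A, hA, hAi⟩ := exists_compact_superset (f.isCompact_preimage.2 (hD.cthickening (r := s)))
  refine ⟨A, hA, ?_⟩
  filter_upwards [(f : C(X, X)).eventually_forall_dist_lt hA hs] with g hclose ⟨G, hG⟩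
  simp only [ContinuousMap.coe_mk] at hclose
  have hyA : f.symm y ∈ interior A :=
    hAi (by simpa using self_subset_cthickening D (interior_subset hy))
  have hGD : G ⁻¹' D = g ⁻¹' D := by ext x; simp [hG]
  have hmeet : (G ⁻¹' D ∩ interior A).Nonempty := by
    refine ⟨f.symm y, ?_, hyA⟩
    have := hclose _ (interior_subset hyA)
    rw [f.apply_symm_apply, ← hG] at this
    exact interior_subset (s := D) (hsD (mem_ball_comm.1 this))
  have hfront : Disjoint (G ⁻¹' D) (frontier A) := by
    refine disjoint_left.2 fun x hxD hxA => hxA.2 (hAi ?_)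
    rw [mem_preimage, hG] at hxD
    exact thickening_subset_cthickening s D
      (mem_thickening_iff.2 ⟨g x, hxD, hclose x (hA.isClosed.frontier_subset hxA)⟩)
  rw [← hGD]
  exact ((G.isPreconnected_preimage.2 hDc).subset_interior_of_disjoint_frontier hmeet
    hfront).trans interior_subset

theorem isBounded_biUnion_preimage_of_isPreconnected {F : Set C(X, X)} (hF : IsCompact F)
    (hhomeo : ∀ f ∈ F, ∃ G : X ≃ₜ X, ∀ x, G x = f x) {D : Set X} (hD : IsCompact D)
    (hDc : IsPreconnected D) (hDi : (interior D).Nonempty) :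
    IsBounded (⋃ f ∈ F, f ⁻¹' D) := by
  refine hF.induction_on (p := fun F' => IsBounded (⋃ f ∈ F', f ⁻¹' D)) (by simp)
    (fun _ _ hst ht => ht.subset (biUnion_subset_biUnion_left hst))
    (fun _ _ hs ht => by simpa only [biUnion_union] using hs.union ht) fun f hf => ?_
  obtain ⟨G, hG⟩ := hhomeo f hf
  obtain rfl : (G : C(X, X)) = f := ContinuousMap.ext hG
  obtain ⟨A, hA, hAG⟩ := G.exists_isCompact_eventually_preimage_subset hD hDc hDi
  refine ⟨F ∩ {g | (∃ G : X ≃ₜ X, ∀ x, G x = g x) → g ⁻¹' D ⊆ A},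
    inter_mem_nhdsWithin F hAG, hA.isBounded.subset (iUnion₂_subset fun g hg => ?_)⟩
  exact hg.2 (hhomeo g hg.1)

theorem isBounded_biUnion_preimage [LocallyConnectedSpace X] {F : Set C(X, X)}
    (hF : IsCompact F) (hhomeo : ∀ f ∈ F, ∃ G : X ≃ₜ X, ∀ x, G x = f x) {K : Set X}
    (hK : IsCompact K) : IsBounded (⋃ f ∈ F, f ⁻¹' K) := by
  refine hK.induction_on (p := fun K' => IsBounded (⋃ f ∈ F, f ⁻¹' K')) (by simp)
    (fun _ _ hst ht => ht.subset (iUnion₂_mono fun f _ => preimage_mono hst))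
    (fun _ _ hs ht => by simpa only [preimage_union, iUnion_union_distrib] using hs.union ht)
    fun x _ => ?_
  obtain ⟨D, hDx, hD, hDc⟩ := exists_mem_nhds_isCompact_isPreconnected x
  exact ⟨D, mem_nhdsWithin_of_mem_nhds hDx, isBounded_biUnion_preimage_of_isPreconnected hF
    hhomeo hD hDc ⟨x, mem_interior_iff_mem_nhds.2 hDx⟩⟩

theorem exists_pos_le_dist_apply_of_le_dist [LocallyConnectedSpace X] {F : Set C(X, X)}
    (hF : IsCompact F) (hhomeo : ∀ f ∈ F, ∃ G : X ≃ₜ X, ∀ x, G x = f x) {Q : Set X}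
    (hQ : IsCompact Q) {r : ℝ} (hr : 0 < r) :
    ∃ δ > 0, ∀ f ∈ F, ∀ z ∈ Q, ∀ w, r ≤ dist z w → δ ≤ dist (f z) (f w) := by
  set K := (fun p : C(X, X) × X => p.1 p.2) '' (F ×ˢ Q)
  have hK : IsCompact K := (hF.prod hQ).image continuous_eval
  -- `w ∈ L` as soon as `dist (f z) (f w) ≤ 1`; farther pairs are handled by the `min _ 1` below.
  set L := closure (⋃ f ∈ F, f ⁻¹' cthickening 1 K)
  have hL : IsCompact L := (isBounded_biUnion_preimage hF hhomeo hK.cthickening).isCompact_closure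
  set S := (F ×ˢ Q ×ˢ L) ∩ {p : C(X, X) × X × X | r ≤ dist p.2.1 p.2.2}
  have hS : IsCompact S :=
    (hF.prod (hQ.prod hL)).inter_right (isClosed_le continuous_const (by fun_prop))
  have hφ : Continuous fun p : C(X, X) × X × X => dist (p.1 p.2.1) (p.1 p.2.2) := by fun_prop
  have hpos : ∀ p ∈ S, 0 < dist (p.1 p.2.1) (p.1 p.2.2) := by
    rintro ⟨f, z, w⟩ ⟨⟨hf, -, -⟩, hzw⟩
    obtain ⟨G, hG⟩ := hhomeo f hf
    rw [dist_pos, ← hG, ← hG]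
    exact G.injective.ne (dist_pos.1 (hr.trans_le hzw))
  obtain ⟨δ, hδ, hδS⟩ := hS.exists_forall_le' hφ.continuousOn hpos
  refine ⟨min δ 1, lt_min hδ one_pos, fun f hf z hz w hzw => ?_⟩
  by_cases hfw : dist (f z) (f w) ≤ 1
  · have hw : w ∈ L := subset_closure <| mem_biUnion hf <|
      mem_cthickening_of_dist_le _ (f z) 1 K ⟨(f, z), ⟨hf, hz⟩, rfl⟩ (by rwa [dist_comm])
    exact (min_le_left _ _).trans (hδS (f, z, w) ⟨⟨hf, hz, hw⟩, hzw⟩)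
  · exact (min_le_right _ _).trans (not_le.1 hfw).le

end

/-- Let `X` be a proper metric space homeomorphic to `ℝᵐ`, `r > 0`, `Q₀ ⊆ X` compact, and
`F` a compact family (compact-open topology) of homeomorphisms of `X` onto itself with the
normalization property: for every `z ∈ X` and `f ∈ F` there are isometries `g₁, g₂` of `X`
with `g₁(z) ∈ Q₀` and `g₂ ∘ f ∘ g₁⁻¹ ∈ F`. Then there exists `ε > 0` such that any
`h : X → X` uniformly `ε`-close to some `f ∈ F` which is injective at scale `r`
(`h(z) ≠ h(w)` whenever `z ≠ w` and `d(z,w) < r`) is injective. -/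
theorem stmt_17 {X : Type*} [MetricSpace X] [ProperSpace X]
    (m : ℕ) (e : X ≃ₜ EuclideanSpace ℝ (Fin m))
    (r : ℝ) (hr : 0 < r)
    (Q₀ : Set X) (hQ₀ : IsCompact Q₀)
    (F : Set (ContinuousMap X X)) (hF : IsCompact F)
    (hhomeo : ∀ f ∈ F, ∃ g : X ≃ₜ X, ∀ x : X, g x = f x)
    (hnorm : ∀ z : X, ∀ f ∈ F, ∃ g₁ g₂ : X ≃ᵢ X,
      g₁ z ∈ Q₀ ∧ ∃ f' ∈ F, ∀ x : X, f' x = g₂ (f (g₁.symm x))) :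
    ∃ ε : ℝ, 0 < ε ∧
      ∀ h : X → X,
        (∃ f ∈ F, ∀ x : X, dist (h x) (f x) < ε) →
        (∀ z w : X, z ≠ w → dist z w < r → h z ≠ h w) →
        Function.Injective h := by
  have := e.locallyConnectedSpace
  obtain ⟨δ, hδ, hsep⟩ := exists_pos_le_dist_apply_of_le_dist hF hhomeo hQ₀ hr
  refine ⟨δ / 2, half_pos hδ, ?_⟩
  rintro h ⟨f, hf, hclose⟩ hlocal z w hzw
  by_contra hne
  have hrzw : r ≤ dist z w := not_lt.1 fun hlt => hlocal z w hne hlt hzw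
  obtain ⟨g₁, g₂, hg₁z, f', hf', hf'f⟩ := hnorm z f hf
  have hδf : δ ≤ dist (f z) (f w) := by
    simpa [hf'f, g₂.dist_eq] using hsep f' hf' (g₁ z) hg₁z (g₁ w) (by rwa [g₁.dist_eq])
  have hw : dist (h z) (f w) < δ / 2 := hzw ▸ hclose w
  linarith [hclose z, dist_triangle_left (f z) (f w) (h z)]
end
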